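/- For every n ≥ 3, the number of permutations of {1,…,n} that contain exactly one (132) pattern and no (123) pattern equals (n−2)·2^{n−3} (and this number is 0 for n < 3); equivalently Σ_{n≥0} g₀(n) zⁿ = z³/(1−2z)². Moreover, for every n ≥ 5, the number of permutations of {1,…,n} that contain exactly one (132) pattern and exactly one (123) pattern equals (n−3)(n−4)·2^{n−5} (and is 0 for n < 5); equivalently Σ_{n≥0} g₁(n) zⁿ = 2z⁵/(1−2z)³. -/

import Mathlib

/-- `count132 a` is the number of (132) patterns of `a`, i.e. the number of
triples of indices `i < j < k` with `a i < a k < a j`. -/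
def count132 {m : ℕ} (a : Fin m → ℕ) : ℕ :=
  (Finset.univ.filter (fun t : Fin m × Fin m × Fin m =>
    t.1 < t.2.1 ∧ t.2.1 < t.2.2 ∧ a t.1 < a t.2.2 ∧ a t.2.2 < a t.2.1)).card

/-- `count123 a` is the number of (123) patterns of `a`. -/
def count123 {m : ℕ} (a : Fin m → ℕ) : ℕ :=
  (Finset.univ.filter (fun t : Fin m × Fin m × Fin m =>
    t.1 < t.2.1 ∧ t.2.1 < t.2.2 ∧ a t.1 < a t.2.1 ∧ a t.2.1 < a t.2.2)).card

open Finset Equiv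

namespace S19

variable {n : ℕ}

/-- number of 132 patterns of a permutation -/
def c2 (σ : Perm (Fin n)) : ℕ := count132 (fun i => (σ i : ℕ))

/-- number of 123 patterns of a permutation -/
def c3 (σ : Perm (Fin n)) : ℕ := count123 (fun i => (σ i : ℕ))

/-- straddling ascents at cut q -/
def Ast (σ : Perm (Fin n)) (q : ℕ) : ℕ :=
  (Finset.univ.filter (fun ik : Fin n × Fin n =>
    (ik.1 : ℕ) < q ∧ q ≤ (ik.2 : ℕ) ∧ (σ ik.1 : ℕ) < (σ ik.2 : ℕ))).card

/-- ascent pairs before cut q -/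
def Bst (σ : Perm (Fin n)) (q : ℕ) : ℕ :=
  (Finset.univ.filter (fun ij : Fin n × Fin n =>
    (ij.1 : ℕ) < (ij.2 : ℕ) ∧ (ij.2 : ℕ) < q ∧ (σ ij.1 : ℕ) < (σ ij.2 : ℕ))).card

/-- insert the new maximal value at position `p` -/
def ins (p : Fin (n+1)) (σ : Perm (Fin n)) : Perm (Fin (n+1)) :=
  (finSuccEquiv' p).trans ((Equiv.optionCongr σ).trans (finSuccEquiv' (Fin.last n)).symm)

@[simp] lemma ins_at (p : Fin (n+1)) (σ : Perm (Fin n)) : ins p σ p = Fin.last n := by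
  simp [ins, finSuccEquiv'_at, finSuccEquiv'_symm_none]

@[simp] lemma ins_succAbove (p : Fin (n+1)) (σ : Perm (Fin n)) (i : Fin n) :
    ins p σ (p.succAbove i) = (σ i).castSucc := by
  simp [ins, finSuccEquiv'_succAbove, finSuccEquiv'_symm_some, Fin.succAbove_last]

lemma ins_bijective : Function.Bijective
    (fun x : Fin (n+1) × Perm (Fin n) => ins x.1 x.2) := by
  constructor
  · rintro ⟨p, σ⟩ ⟨p', σ'⟩ h
    simp only at h
    have hp : p = p' := by
      by_contra hne
      obtain ⟨i, hi⟩ := Fin.exists_succAbove_eq hne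
      have h1 : ins p σ p = ins p' σ' p := by rw [h]
      rw [ins_at, ← hi, ins_succAbove] at h1
      exact absurd h1.symm (Fin.castSucc_lt_last (σ' i)).ne
    subst hp
    have hσ : σ = σ' := by
      ext i
      have h1 : ins p σ (p.succAbove i) = ins p σ' (p.succAbove i) := by rw [h]
      rw [ins_succAbove, ins_succAbove] at h1
      exact Fin.val_eq_of_eq (Fin.castSucc_injective _ h1)
    rw [hσ]
  · intro π
    set p := π.symm (Fin.last n) with hp
    set e : Option (Fin n) ≃ Option (Fin n) :=
      (finSuccEquiv' p).symm.trans (π.trans (finSuccEquiv' (Fin.last n))) with he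
    have hsome : ∀ i : Fin n, ∃ y, e (some i) = some y := by
      intro i
      have hne : π (p.succAbove i) ≠ Fin.last n := by
        rw [hp]
        intro hcon
        have := π.injective (hcon.trans (π.apply_symm_apply (Fin.last n)).symm)
        exact Fin.succAbove_ne _ i this
      have : e (some i) = finSuccEquiv' (Fin.last n) (π (p.succAbove i)) := by
        simp [he, finSuccEquiv'_symm_some]
      rcases h2 : finSuccEquiv' (Fin.last n) (π (p.succAbove i)) with _ | y
      · exfalso
        have := (finSuccEquiv' (Fin.last n)).injective
          (h2.trans (finSuccEquiv'_at (Fin.last n)).symm)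
        exact hne this
      · exact ⟨y, by rw [this, h2]⟩
    refine ⟨⟨p, Equiv.removeNone e⟩, ?_⟩
    simp only
    ext j
    rcases eq_or_ne j p with rfl | hne
    · rw [ins_at, hp, π.apply_symm_apply]
    · obtain ⟨i, rfl⟩ := Fin.exists_succAbove_eq hne
      rw [ins_succAbove]
      have h1 : some (Equiv.removeNone e i) = e (some i) := Equiv.removeNone_some e (hsome i)
      have h2 : e (some i) = finSuccEquiv' (Fin.last n) (π (p.succAbove i)) := by
        simp [he, finSuccEquiv'_symm_some]
      have h3 : (finSuccEquiv' (Fin.last n)).symm (some (Equiv.removeNone e i))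
          = π (p.succAbove i) := by
        rw [h1, h2, Equiv.symm_apply_apply]
      rw [← h3, finSuccEquiv'_symm_some, Fin.succAbove_last]

lemma sum_ins (f : Perm (Fin (n+1)) → ℕ) :
    ∑ π : Perm (Fin (n+1)), f π = ∑ p : Fin (n+1), ∑ σ : Perm (Fin n), f (ins p σ) := by
  calc ∑ π : Perm (Fin (n+1)), f π
      = ∑ x : Fin (n+1) × Perm (Fin n), f (ins x.1 x.2) :=
        (Function.Bijective.sum_comp ins_bijective f).symm
    _ = ∑ p : Fin (n+1), ∑ σ : Perm (Fin n), f (ins p σ) := Fintype.sum_prod_type _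

end S19

namespace S19

variable {n : ℕ}

lemma sval_cases (p : Fin (n+1)) (i : Fin n) :
    ((p.succAbove i : Fin (n+1)) : ℕ) = (i : ℕ) ∧ (i : ℕ) < (p : ℕ) ∨
    ((p.succAbove i : Fin (n+1)) : ℕ) = (i : ℕ) + 1 ∧ (p : ℕ) ≤ (i : ℕ) := by
  rcases lt_or_ge ((i : ℕ)) ((p : ℕ)) with h | h
  · left
    refine ⟨?_, h⟩
    rw [Fin.succAbove_of_castSucc_lt _ _ (by rwa [Fin.lt_def])]
    rfl
  · right
    refine ⟨?_, h⟩
    rw [Fin.succAbove_of_le_castSucc _ _ (by rwa [Fin.le_def])]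
    rfl

lemma ins_val_at (p : Fin (n+1)) (σ : Perm (Fin n)) : ((ins p σ) p : ℕ) = n := by
  rw [ins_at]; rfl

lemma ins_val_sA (p : Fin (n+1)) (σ : Perm (Fin n)) (i : Fin n) :
    ((ins p σ) (p.succAbove i) : ℕ) = (σ i : ℕ) := by
  rw [ins_succAbove]; rfl

lemma card_val_lt (q : ℕ) (hq : q ≤ n + 1) :
    ((Finset.univ : Finset (Fin (n+1))).filter (fun i : Fin (n+1) => (i : ℕ) < q)).card = q := by
  have key : ((Finset.univ : Finset (Fin (n+1))).filter
      (fun i : Fin (n+1) => (i : ℕ) < q)).card = (Finset.range q).card := by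
    apply Finset.card_bij (fun (a : Fin (n+1)) _ => (a : ℕ))
    · intro a ha
      simp only [Finset.mem_filter] at ha
      exact Finset.mem_range.mpr ha.2
    · intro a _ b _ h
      exact Fin.val_injective h
    · intro b hb
      have hb' := Finset.mem_range.mp hb
      exact ⟨⟨b, lt_of_lt_of_le hb' hq⟩, Finset.mem_filter.mpr ⟨Finset.mem_univ _, hb'⟩, rfl⟩
  rw [key, Finset.card_range]

lemma c3_ins (p : Fin (n+1)) (σ : Perm (Fin n)) : c3 (ins p σ) = c3 σ + Bst σ (p : ℕ) := by
  classical
  unfold c3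
  simp only [count123]
  rw [← Finset.card_filter_add_card_filter_not
    (p := fun t : Fin (n+1) × Fin (n+1) × Fin (n+1) => t.2.2 = p),
    Finset.filter_filter, Finset.filter_filter]
  have h1 : (Finset.univ.filter (fun t : Fin (n+1) × Fin (n+1) × Fin (n+1) =>
      (t.1 < t.2.1 ∧ t.2.1 < t.2.2 ∧ ((ins p σ) t.1 : ℕ) < ((ins p σ) t.2.1 : ℕ) ∧
        ((ins p σ) t.2.1 : ℕ) < ((ins p σ) t.2.2 : ℕ)) ∧ t.2.2 = p)).card
      = Bst σ (p : ℕ) := by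
    unfold Bst
    symm
    apply Finset.card_bij (fun (x : Fin n × Fin n) _ => (p.succAbove x.1, p.succAbove x.2, p))
    · intro x hx
      simp only [Finset.mem_filter, Finset.mem_univ, true_and] at hx
      obtain ⟨h12, h2p, hv⟩ := hx
      refine Finset.mem_filter.mpr ⟨Finset.mem_univ _, ⟨?_, ?_, ?_, ?_⟩, rfl⟩
      · exact (Fin.succAbove_lt_succAbove_iff).mpr (by rwa [Fin.lt_def])
      · exact (Fin.succAbove_lt_iff_castSucc_lt _ _).mpr (by rwa [Fin.lt_def])
      · rwa [ins_val_sA, ins_val_sA]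
      · rw [ins_val_sA, ins_val_at]; exact (σ x.2).is_lt
    · intro a _ b _ h
      simp only [Prod.mk.injEq] at h
      exact Prod.ext (Fin.succAbove_right_injective h.1) (Fin.succAbove_right_injective h.2.1)
    · intro t ht
      simp only [Finset.mem_filter, Finset.mem_univ, true_and] at ht
      obtain ⟨⟨h12, h23, hv1, hv2⟩, hp⟩ := ht
      have h2p : t.2.1 ≠ p := by rw [← hp]; exact ne_of_lt h23
      have h1p : t.1 ≠ p := by rw [← hp]; exact ne_of_lt (h12.trans h23)
      obtain ⟨i, hi⟩ := Fin.exists_succAbove_eq h1p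
      obtain ⟨j, hj⟩ := Fin.exists_succAbove_eq h2p
      refine ⟨(i, j), Finset.mem_filter.mpr ⟨Finset.mem_univ _, ?_, ?_, ?_⟩, ?_⟩
      · have h' : p.succAbove i < p.succAbove j := by rw [hi, hj]; exact h12
        exact Fin.lt_def.mp ((Fin.succAbove_lt_succAbove_iff).mp h')
      · have h' : p.succAbove j < p := by rw [hj, ← hp]; exact h23
        exact Fin.lt_def.mp ((Fin.succAbove_lt_iff_castSucc_lt _ _).mp h')
      · have h' := hv1
        rw [← hi, ← hj, ins_val_sA, ins_val_sA] at h'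
        exact h'
      · rw [hi, hj]
        exact Prod.ext rfl (Prod.ext rfl hp.symm)
  have h2 : (Finset.univ.filter (fun t : Fin (n+1) × Fin (n+1) × Fin (n+1) =>
      (t.1 < t.2.1 ∧ t.2.1 < t.2.2 ∧ ((ins p σ) t.1 : ℕ) < ((ins p σ) t.2.1 : ℕ) ∧
        ((ins p σ) t.2.1 : ℕ) < ((ins p σ) t.2.2 : ℕ)) ∧ ¬ t.2.2 = p)).card
      = (Finset.univ.filter (fun t : Fin n × Fin n × Fin n =>
        t.1 < t.2.1 ∧ t.2.1 < t.2.2 ∧ (σ t.1 : ℕ) < (σ t.2.1 : ℕ) ∧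
        (σ t.2.1 : ℕ) < (σ t.2.2 : ℕ))).card := by
    symm
    apply Finset.card_bij (fun (x : Fin n × Fin n × Fin n) _ =>
      (p.succAbove x.1, p.succAbove x.2.1, p.succAbove x.2.2))
    · intro x hx
      simp only [Finset.mem_filter, Finset.mem_univ, true_and] at hx
      obtain ⟨h12, h23, hv1, hv2⟩ := hx
      refine Finset.mem_filter.mpr ⟨Finset.mem_univ _, ⟨?_, ?_, ?_, ?_⟩, Fin.succAbove_ne p _⟩
      · exact (Fin.succAbove_lt_succAbove_iff).mpr h12
      · exact (Fin.succAbove_lt_succAbove_iff).mpr h23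
      · rwa [ins_val_sA, ins_val_sA]
      · rwa [ins_val_sA, ins_val_sA]
    · intro a _ b _ h
      simp only [Prod.mk.injEq] at h
      exact Prod.ext (Fin.succAbove_right_injective h.1)
        (Prod.ext (Fin.succAbove_right_injective h.2.1) (Fin.succAbove_right_injective h.2.2))
    · intro t ht
      simp only [Finset.mem_filter, Finset.mem_univ, true_and] at ht
      obtain ⟨⟨h12, h23, hv1, hv2⟩, hp3⟩ := ht
      have h2p : t.2.1 ≠ p := by
        intro hcon
        rw [hcon, ins_val_at] at hv2
        exact absurd hv2 (not_lt.mpr (Fin.is_le _))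
      have h1p : t.1 ≠ p := by
        intro hcon
        rw [hcon, ins_val_at] at hv1
        exact absurd hv1 (not_lt.mpr (Fin.is_le _))
      obtain ⟨i, hi⟩ := Fin.exists_succAbove_eq h1p
      obtain ⟨j, hj⟩ := Fin.exists_succAbove_eq h2p
      obtain ⟨k, hk⟩ := Fin.exists_succAbove_eq hp3
      refine ⟨(i, j, k), Finset.mem_filter.mpr ⟨Finset.mem_univ _, ?_, ?_, ?_, ?_⟩, ?_⟩
      · rw [← hi, ← hj, Fin.succAbove_lt_succAbove_iff] at h12; exact h12
      · rw [← hj, ← hk, Fin.succAbove_lt_succAbove_iff] at h23; exact h23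
      · rw [← hi, ← hj, ins_val_sA, ins_val_sA] at hv1; exact hv1
      · rw [← hj, ← hk, ins_val_sA, ins_val_sA] at hv2; exact hv2
      · rw [hi, hj, hk]
  rw [h1, h2]
  omega

end S19

namespace S19

variable {n : ℕ}

lemma c2_ins (p : Fin (n+1)) (σ : Perm (Fin n)) : c2 (ins p σ) = c2 σ + Ast σ (p : ℕ) := by
  classical
  unfold c2
  simp only [count132]
  rw [← Finset.card_filter_add_card_filter_not
    (p := fun t : Fin (n+1) × Fin (n+1) × Fin (n+1) => t.2.1 = p),
    Finset.filter_filter, Finset.filter_filter]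
  have h1 : (Finset.univ.filter (fun t : Fin (n+1) × Fin (n+1) × Fin (n+1) =>
      (t.1 < t.2.1 ∧ t.2.1 < t.2.2 ∧ ((ins p σ) t.1 : ℕ) < ((ins p σ) t.2.2 : ℕ) ∧
        ((ins p σ) t.2.2 : ℕ) < ((ins p σ) t.2.1 : ℕ)) ∧ t.2.1 = p)).card
      = Ast σ (p : ℕ) := by
    unfold Ast
    symm
    apply Finset.card_bij (fun (x : Fin n × Fin n) _ => (p.succAbove x.1, p, p.succAbove x.2))
    · intro x hx
      simp only [Finset.mem_filter, Finset.mem_univ, true_and] at hx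
      obtain ⟨h1p, hpk, hv⟩ := hx
      have c1 : p.succAbove x.1 < p :=
        (Fin.succAbove_lt_iff_castSucc_lt _ _).mpr (by rwa [Fin.lt_def])
      have c2 : p < p.succAbove x.2 :=
        (Fin.lt_succAbove_iff_le_castSucc _ _).mpr (by rwa [Fin.le_def])
      have c3 : ((ins p σ) (p.succAbove x.1) : ℕ) < ((ins p σ) (p.succAbove x.2) : ℕ) := by
        rwa [ins_val_sA, ins_val_sA]
      have c4 : ((ins p σ) (p.succAbove x.2) : ℕ) < ((ins p σ) p : ℕ) := by
        rw [ins_val_sA, ins_val_at]; exact (σ x.2).is_lt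
      exact Finset.mem_filter.mpr ⟨Finset.mem_univ _, ⟨c1, c2, c3, c4⟩, rfl⟩
    · intro a _ b _ h
      simp only [Prod.mk.injEq] at h
      exact Prod.ext (Fin.succAbove_right_injective h.1) (Fin.succAbove_right_injective h.2.2)
    · intro t ht
      simp only [Finset.mem_filter, Finset.mem_univ, true_and] at ht
      obtain ⟨⟨h12, h23, hv1, hv2⟩, hp⟩ := ht
      have h1p : t.1 ≠ p := by rw [← hp]; exact ne_of_lt h12
      have h3p : t.2.2 ≠ p := by rw [← hp]; exact (ne_of_lt h23).symm
      obtain ⟨i, hi⟩ := Fin.exists_succAbove_eq h1p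
      obtain ⟨k, hk⟩ := Fin.exists_succAbove_eq h3p
      have d1 : (i : ℕ) < (p : ℕ) := by
        have h' : p.succAbove i < p := by rw [hi, ← hp]; exact h12
        exact Fin.lt_def.mp ((Fin.succAbove_lt_iff_castSucc_lt _ _).mp h')
      have d2 : (p : ℕ) ≤ (k : ℕ) := by
        have h' : p < p.succAbove k := by rw [hk, ← hp]; exact h23
        exact Fin.le_def.mp ((Fin.lt_succAbove_iff_le_castSucc _ _).mp h')
      have d3 : (σ i : ℕ) < (σ k : ℕ) := by
        rw [← hi, ← hk, ins_val_sA, ins_val_sA] at hv1; exact hv1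
      exact ⟨(i, k), Finset.mem_filter.mpr ⟨Finset.mem_univ _, d1, d2, d3⟩,
        by rw [hi, hk]; exact Prod.ext rfl (Prod.ext hp.symm rfl)⟩
  have h2 : (Finset.univ.filter (fun t : Fin (n+1) × Fin (n+1) × Fin (n+1) =>
      (t.1 < t.2.1 ∧ t.2.1 < t.2.2 ∧ ((ins p σ) t.1 : ℕ) < ((ins p σ) t.2.2 : ℕ) ∧
        ((ins p σ) t.2.2 : ℕ) < ((ins p σ) t.2.1 : ℕ)) ∧ ¬ t.2.1 = p)).card
      = (Finset.univ.filter (fun t : Fin n × Fin n × Fin n =>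
        t.1 < t.2.1 ∧ t.2.1 < t.2.2 ∧ (σ t.1 : ℕ) < (σ t.2.2 : ℕ) ∧
        (σ t.2.2 : ℕ) < (σ t.2.1 : ℕ))).card := by
    symm
    apply Finset.card_bij (fun (x : Fin n × Fin n × Fin n) _ =>
      (p.succAbove x.1, p.succAbove x.2.1, p.succAbove x.2.2))
    · intro x hx
      simp only [Finset.mem_filter, Finset.mem_univ, true_and] at hx
      obtain ⟨h12, h23, hv1, hv2⟩ := hx
      have c1 := (Fin.succAbove_lt_succAbove_iff (p := p)).mpr h12
      have c2 := (Fin.succAbove_lt_succAbove_iff (p := p)).mpr h23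
      have c3 : ((ins p σ) (p.succAbove x.1) : ℕ) < ((ins p σ) (p.succAbove x.2.2) : ℕ) := by
        rwa [ins_val_sA, ins_val_sA]
      have c4 : ((ins p σ) (p.succAbove x.2.2) : ℕ) < ((ins p σ) (p.succAbove x.2.1) : ℕ) := by
        rwa [ins_val_sA, ins_val_sA]
      exact Finset.mem_filter.mpr ⟨Finset.mem_univ _, ⟨c1, c2, c3, c4⟩, Fin.succAbove_ne p _⟩
    · intro a _ b _ h
      simp only [Prod.mk.injEq] at h
      exact Prod.ext (Fin.succAbove_right_injective h.1)
        (Prod.ext (Fin.succAbove_right_injective h.2.1) (Fin.succAbove_right_injective h.2.2))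
    · intro t ht
      simp only [Finset.mem_filter, Finset.mem_univ, true_and] at ht
      obtain ⟨⟨h12, h23, hv1, hv2⟩, hp2⟩ := ht
      have h1p : t.1 ≠ p := by
        intro hcon
        rw [hcon, ins_val_at] at hv1
        exact absurd hv1 (not_lt.mpr (Fin.is_le _))
      have h3p : t.2.2 ≠ p := by
        intro hcon
        rw [hcon, ins_val_at] at hv2
        exact absurd hv2 (not_lt.mpr (Fin.is_le _))
      obtain ⟨i, hi⟩ := Fin.exists_succAbove_eq h1p
      obtain ⟨j, hj⟩ := Fin.exists_succAbove_eq hp2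
      obtain ⟨k, hk⟩ := Fin.exists_succAbove_eq h3p
      have d1 : i < j := by
        rw [← hi, ← hj, Fin.succAbove_lt_succAbove_iff] at h12; exact h12
      have d2 : j < k := by
        rw [← hj, ← hk, Fin.succAbove_lt_succAbove_iff] at h23; exact h23
      have d3 : (σ i : ℕ) < (σ k : ℕ) := by
        rw [← hi, ← hk, ins_val_sA, ins_val_sA] at hv1; exact hv1
      have d4 : (σ k : ℕ) < (σ j : ℕ) := by
        rw [← hk, ← hj, ins_val_sA, ins_val_sA] at hv2; exact hv2
      exact ⟨(i, j, k), Finset.mem_filter.mpr ⟨Finset.mem_univ _, d1, d2, d3, d4⟩,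
        by rw [hi, hj, hk]⟩
  rw [h1, h2]
  omega

lemma Ast_ins_le (p : Fin (n+1)) (σ : Perm (Fin n)) (q : ℕ) (hq : q ≤ (p : ℕ)) :
    Ast (ins p σ) q = Ast σ q + q := by
  classical
  unfold Ast
  rw [← Finset.card_filter_add_card_filter_not
    (p := fun ik : Fin (n+1) × Fin (n+1) => ik.2 = p),
    Finset.filter_filter, Finset.filter_filter]
  have h1 : (Finset.univ.filter (fun ik : Fin (n+1) × Fin (n+1) =>
      ((ik.1 : ℕ) < q ∧ q ≤ (ik.2 : ℕ) ∧ ((ins p σ) ik.1 : ℕ) < ((ins p σ) ik.2 : ℕ)) ∧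
        ik.2 = p)).card = q := by
    have key : ((Finset.univ : Finset (Fin (n+1))).filter
        (fun i : Fin (n+1) => (i : ℕ) < q)).card
        = (Finset.univ.filter (fun ik : Fin (n+1) × Fin (n+1) =>
          ((ik.1 : ℕ) < q ∧ q ≤ (ik.2 : ℕ) ∧ ((ins p σ) ik.1 : ℕ) < ((ins p σ) ik.2 : ℕ)) ∧
            ik.2 = p)).card := by
      apply Finset.card_bij (fun (a : Fin (n+1)) _ => (a, p))
      · intro a ha
        simp only [Finset.mem_filter, Finset.mem_univ, true_and] at ha
        have hap : a ≠ p := by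
          intro hcon
          rw [hcon] at ha
          omega
        obtain ⟨i, hi⟩ := Fin.exists_succAbove_eq hap
        have c3 : ((ins p σ) a : ℕ) < ((ins p σ) p : ℕ) := by
          rw [← hi, ins_val_sA, ins_val_at]
          exact (σ i).is_lt
        exact Finset.mem_filter.mpr ⟨Finset.mem_univ _, ⟨ha, hq, c3⟩, rfl⟩
      · intro a _ b _ h
        simp only [Prod.mk.injEq] at h
        exact h.1
      · intro ik hik
        simp only [Finset.mem_filter, Finset.mem_univ, true_and] at hik
        obtain ⟨⟨hi, _, _⟩, hp2⟩ := hik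
        exact ⟨ik.1, Finset.mem_filter.mpr ⟨Finset.mem_univ _, hi⟩,
          Prod.ext rfl hp2.symm⟩
    rw [← key, card_val_lt (n := n) q (by omega)]
  have h2 : (Finset.univ.filter (fun ik : Fin (n+1) × Fin (n+1) =>
      ((ik.1 : ℕ) < q ∧ q ≤ (ik.2 : ℕ) ∧ ((ins p σ) ik.1 : ℕ) < ((ins p σ) ik.2 : ℕ)) ∧
        ¬ ik.2 = p)).card
      = (Finset.univ.filter (fun ik : Fin n × Fin n =>
        (ik.1 : ℕ) < q ∧ q ≤ (ik.2 : ℕ) ∧ (σ ik.1 : ℕ) < (σ ik.2 : ℕ))).card := by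
    symm
    apply Finset.card_bij (fun (x : Fin n × Fin n) _ => (p.succAbove x.1, p.succAbove x.2))
    · intro x hx
      simp only [Finset.mem_filter, Finset.mem_univ, true_and] at hx
      obtain ⟨hi, hk, hv⟩ := hx
      have c1 : ((p.succAbove x.1 : Fin (n+1)) : ℕ) < q := by
        rcases sval_cases p x.1 with ⟨h, _⟩ | ⟨h, h'⟩ <;> omega
      have c2 : q ≤ ((p.succAbove x.2 : Fin (n+1)) : ℕ) := by
        rcases sval_cases p x.2 with ⟨h, _⟩ | ⟨h, h'⟩ <;> omega
      have c3 : ((ins p σ) (p.succAbove x.1) : ℕ) < ((ins p σ) (p.succAbove x.2) : ℕ) := by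
        rwa [ins_val_sA, ins_val_sA]
      exact Finset.mem_filter.mpr ⟨Finset.mem_univ _, ⟨c1, c2, c3⟩, Fin.succAbove_ne p _⟩
    · intro a _ b _ h
      simp only [Prod.mk.injEq] at h
      exact Prod.ext (Fin.succAbove_right_injective h.1) (Fin.succAbove_right_injective h.2)
    · intro ik hik
      simp only [Finset.mem_filter, Finset.mem_univ, true_and] at hik
      obtain ⟨⟨hi, hk, hv⟩, hp2⟩ := hik
      have hp1 : ik.1 ≠ p := by
        intro hcon
        rw [hcon] at hi
        omega
      obtain ⟨i, hi'⟩ := Fin.exists_succAbove_eq hp1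
      obtain ⟨k, hk'⟩ := Fin.exists_succAbove_eq hp2
      have d1 : (i : ℕ) < q := by
        rcases sval_cases p i with ⟨h, _⟩ | ⟨h, h'⟩ <;> (rw [← hi'] at hi; omega)
      have d2 : q ≤ (k : ℕ) := by
        rcases sval_cases p k with ⟨h, _⟩ | ⟨h, h'⟩ <;> (rw [← hk'] at hk; omega)
      have d3 : (σ i : ℕ) < (σ k : ℕ) := by
        rw [← hi', ← hk', ins_val_sA, ins_val_sA] at hv; exact hv
      exact ⟨(i, k), Finset.mem_filter.mpr ⟨Finset.mem_univ _, d1, d2, d3⟩,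
        by rw [hi', hk']⟩
  rw [h1, h2]
  omega

lemma Ast_ins_gt (p : Fin (n+1)) (σ : Perm (Fin n)) (q : ℕ) (hq : (p : ℕ) ≤ q) :
    Ast (ins p σ) (q + 1) = Ast σ q := by
  classical
  unfold Ast
  symm
  apply Finset.card_bij (fun (x : Fin n × Fin n) _ => (p.succAbove x.1, p.succAbove x.2))
  · intro x hx
    simp only [Finset.mem_filter, Finset.mem_univ, true_and] at hx
    obtain ⟨hi, hk, hv⟩ := hx
    have c1 : ((p.succAbove x.1 : Fin (n+1)) : ℕ) < q + 1 := by
      rcases sval_cases p x.1 with ⟨h, _⟩ | ⟨h, h'⟩ <;> omega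
    have c2 : q + 1 ≤ ((p.succAbove x.2 : Fin (n+1)) : ℕ) := by
      rcases sval_cases p x.2 with ⟨h, h'⟩ | ⟨h, h'⟩ <;> omega
    have c3 : ((ins p σ) (p.succAbove x.1) : ℕ) < ((ins p σ) (p.succAbove x.2) : ℕ) := by
      rwa [ins_val_sA, ins_val_sA]
    exact Finset.mem_filter.mpr ⟨Finset.mem_univ _, c1, c2, c3⟩
  · intro a _ b _ h
    simp only [Prod.mk.injEq] at h
    exact Prod.ext (Fin.succAbove_right_injective h.1) (Fin.succAbove_right_injective h.2)
  · intro ik hik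
    simp only [Finset.mem_filter, Finset.mem_univ, true_and] at hik
    obtain ⟨hi, hk, hv⟩ := hik
    have hp1 : ik.1 ≠ p := by
      intro hcon
      rw [hcon, ins_val_at] at hv
      exact absurd hv (not_lt.mpr (Fin.is_le _))
    have hp2 : ik.2 ≠ p := by
      intro hcon
      rw [hcon] at hk
      omega
    obtain ⟨i, hi'⟩ := Fin.exists_succAbove_eq hp1
    obtain ⟨k, hk'⟩ := Fin.exists_succAbove_eq hp2
    have d1 : (i : ℕ) < q := by
      rcases sval_cases p i with ⟨h, h'⟩ | ⟨h, h'⟩ <;> (rw [← hi'] at hi; omega)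
    have d2 : q ≤ (k : ℕ) := by
      rcases sval_cases p k with ⟨h, h'⟩ | ⟨h, h'⟩ <;> (rw [← hk'] at hk; omega)
    have d3 : (σ i : ℕ) < (σ k : ℕ) := by
      rw [← hi', ← hk', ins_val_sA, ins_val_sA] at hv; exact hv
    exact ⟨(i, k), Finset.mem_filter.mpr ⟨Finset.mem_univ _, d1, d2, d3⟩,
      by rw [hi', hk']⟩

lemma Bst_ins_le (p : Fin (n+1)) (σ : Perm (Fin n)) (q : ℕ) (hq : q ≤ (p : ℕ)) :
    Bst (ins p σ) q = Bst σ q := by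
  classical
  unfold Bst
  symm
  apply Finset.card_bij (fun (x : Fin n × Fin n) _ => (p.succAbove x.1, p.succAbove x.2))
  · intro x hx
    simp only [Finset.mem_filter, Finset.mem_univ, true_and] at hx
    obtain ⟨hij, hjq, hv⟩ := hx
    have c1 : ((p.succAbove x.1 : Fin (n+1)) : ℕ) < ((p.succAbove x.2 : Fin (n+1)) : ℕ) := by
      rcases sval_cases p x.1 with ⟨h, h'⟩ | ⟨h, h'⟩ <;>
        rcases sval_cases p x.2 with ⟨h2, h2'⟩ | ⟨h2, h2'⟩ <;> omega
    have c2 : ((p.succAbove x.2 : Fin (n+1)) : ℕ) < q := by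
      rcases sval_cases p x.2 with ⟨h, h'⟩ | ⟨h, h'⟩ <;> omega
    have c3 : ((ins p σ) (p.succAbove x.1) : ℕ) < ((ins p σ) (p.succAbove x.2) : ℕ) := by
      rwa [ins_val_sA, ins_val_sA]
    exact Finset.mem_filter.mpr ⟨Finset.mem_univ _, c1, c2, c3⟩
  · intro a _ b _ h
    simp only [Prod.mk.injEq] at h
    exact Prod.ext (Fin.succAbove_right_injective h.1) (Fin.succAbove_right_injective h.2)
  · intro ik hik
    simp only [Finset.mem_filter, Finset.mem_univ, true_and] at hik
    obtain ⟨hij, hjq, hv⟩ := hik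
    have hp2 : ik.2 ≠ p := by
      intro hcon
      rw [hcon] at hjq
      omega
    have hp1 : ik.1 ≠ p := by
      intro hcon
      rw [hcon] at hij
      have := Fin.is_le ik.2
      omega
    obtain ⟨i, hi'⟩ := Fin.exists_succAbove_eq hp1
    obtain ⟨j, hj'⟩ := Fin.exists_succAbove_eq hp2
    have d1 : (i : ℕ) < (j : ℕ) := by
      rcases sval_cases p i with ⟨h, h'⟩ | ⟨h, h'⟩ <;>
        rcases sval_cases p j with ⟨h2, h2'⟩ | ⟨h2, h2'⟩ <;>
        (rw [← hi', ← hj'] at hij; omega)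
    have d2 : (j : ℕ) < q := by
      rcases sval_cases p j with ⟨h, h'⟩ | ⟨h, h'⟩ <;> (rw [← hj'] at hjq; omega)
    have d3 : (σ i : ℕ) < (σ j : ℕ) := by
      rw [← hi', ← hj', ins_val_sA, ins_val_sA] at hv; exact hv
    exact ⟨(i, j), Finset.mem_filter.mpr ⟨Finset.mem_univ _, d1, d2, d3⟩,
      by rw [hi', hj']⟩

lemma Bst_ins_gt (p : Fin (n+1)) (σ : Perm (Fin n)) (q : ℕ) (hq : (p : ℕ) ≤ q) :
    Bst (ins p σ) (q + 1) = Bst σ q + (p : ℕ) := by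
  classical
  unfold Bst
  rw [← Finset.card_filter_add_card_filter_not
    (p := fun ij : Fin (n+1) × Fin (n+1) => ij.2 = p),
    Finset.filter_filter, Finset.filter_filter]
  have h1 : (Finset.univ.filter (fun ij : Fin (n+1) × Fin (n+1) =>
      ((ij.1 : ℕ) < (ij.2 : ℕ) ∧ (ij.2 : ℕ) < q + 1 ∧
        ((ins p σ) ij.1 : ℕ) < ((ins p σ) ij.2 : ℕ)) ∧ ij.2 = p)).card = (p : ℕ) := by
    have key : ((Finset.univ : Finset (Fin (n+1))).filter
        (fun i : Fin (n+1) => (i : ℕ) < (p : ℕ))).card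
        = (Finset.univ.filter (fun ij : Fin (n+1) × Fin (n+1) =>
          ((ij.1 : ℕ) < (ij.2 : ℕ) ∧ (ij.2 : ℕ) < q + 1 ∧
            ((ins p σ) ij.1 : ℕ) < ((ins p σ) ij.2 : ℕ)) ∧ ij.2 = p)).card := by
      apply Finset.card_bij (fun (a : Fin (n+1)) _ => (a, p))
      · intro a ha
        simp only [Finset.mem_filter, Finset.mem_univ, true_and] at ha
        have hap : a ≠ p := by
          intro hcon
          rw [hcon] at ha
          omega
        obtain ⟨i, hi⟩ := Fin.exists_succAbove_eq hap
        have c3 : ((ins p σ) a : ℕ) < ((ins p σ) p : ℕ) := by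
          rw [← hi, ins_val_sA, ins_val_at]
          exact (σ i).is_lt
        have c2 : (p : ℕ) < q + 1 := by omega
        exact Finset.mem_filter.mpr ⟨Finset.mem_univ _, ⟨ha, c2, c3⟩, rfl⟩
      · intro a _ b _ h
        simp only [Prod.mk.injEq] at h
        exact h.1
      · intro ij hij
        simp only [Finset.mem_filter, Finset.mem_univ, true_and] at hij
        obtain ⟨⟨hlt, _, _⟩, hp2⟩ := hij
        rw [hp2] at hlt
        exact ⟨ij.1, Finset.mem_filter.mpr ⟨Finset.mem_univ _, hlt⟩,
          Prod.ext rfl hp2.symm⟩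
    rw [← key, card_val_lt (n := n) (p : ℕ) (by omega)]
  have h2 : (Finset.univ.filter (fun ij : Fin (n+1) × Fin (n+1) =>
      ((ij.1 : ℕ) < (ij.2 : ℕ) ∧ (ij.2 : ℕ) < q + 1 ∧
        ((ins p σ) ij.1 : ℕ) < ((ins p σ) ij.2 : ℕ)) ∧ ¬ ij.2 = p)).card
      = (Finset.univ.filter (fun ij : Fin n × Fin n =>
        (ij.1 : ℕ) < (ij.2 : ℕ) ∧ (ij.2 : ℕ) < q ∧ (σ ij.1 : ℕ) < (σ ij.2 : ℕ))).card := by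
    symm
    apply Finset.card_bij (fun (x : Fin n × Fin n) _ => (p.succAbove x.1, p.succAbove x.2))
    · intro x hx
      simp only [Finset.mem_filter, Finset.mem_univ, true_and] at hx
      obtain ⟨hij, hjq, hv⟩ := hx
      have c1 : ((p.succAbove x.1 : Fin (n+1)) : ℕ) < ((p.succAbove x.2 : Fin (n+1)) : ℕ) := by
        rcases sval_cases p x.1 with ⟨h, h'⟩ | ⟨h, h'⟩ <;>
          rcases sval_cases p x.2 with ⟨h2, h2'⟩ | ⟨h2, h2'⟩ <;> omega
      have c2 : ((p.succAbove x.2 : Fin (n+1)) : ℕ) < q + 1 := by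
        rcases sval_cases p x.2 with ⟨h, h'⟩ | ⟨h, h'⟩ <;> omega
      have c3 : ((ins p σ) (p.succAbove x.1) : ℕ) < ((ins p σ) (p.succAbove x.2) : ℕ) := by
        rwa [ins_val_sA, ins_val_sA]
      exact Finset.mem_filter.mpr ⟨Finset.mem_univ _, ⟨c1, c2, c3⟩, Fin.succAbove_ne p _⟩
    · intro a _ b _ h
      simp only [Prod.mk.injEq] at h
      exact Prod.ext (Fin.succAbove_right_injective h.1) (Fin.succAbove_right_injective h.2)
    · intro ij hij
      simp only [Finset.mem_filter, Finset.mem_univ, true_and] at hij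
      obtain ⟨⟨hlt, hjq, hv⟩, hp2⟩ := hij
      have hp1 : ij.1 ≠ p := by
        intro hcon
        rw [hcon, ins_val_at] at hv
        exact absurd hv (not_lt.mpr (Fin.is_le _))
      obtain ⟨i, hi'⟩ := Fin.exists_succAbove_eq hp1
      obtain ⟨j, hj'⟩ := Fin.exists_succAbove_eq hp2
      have d1 : (i : ℕ) < (j : ℕ) := by
        rcases sval_cases p i with ⟨h, h'⟩ | ⟨h, h'⟩ <;>
          rcases sval_cases p j with ⟨h2, h2'⟩ | ⟨h2, h2'⟩ <;>
          (rw [← hi', ← hj'] at hlt; omega)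
      have d2 : (j : ℕ) < q := by
        rcases sval_cases p j with ⟨h, h'⟩ | ⟨h, h'⟩ <;> (rw [← hj'] at hjq; omega)
      have d3 : (σ i : ℕ) < (σ j : ℕ) := by
        rw [← hi', ← hj', ins_val_sA, ins_val_sA] at hv; exact hv
      exact ⟨(i, j), Finset.mem_filter.mpr ⟨Finset.mem_univ _, d1, d2, d3⟩,
        by rw [hi', hj']⟩
  rw [h1, h2]
  omega

end S19

namespace S19

variable {n : ℕ}

/-- number of cut points q ≥ 1 with no straddling ascent and no ascent before -/
def dp (σ : Perm (Fin n)) : ℕ :=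
  ∑ i : Fin n, if Ast σ ((i : ℕ) + 1) = 0 ∧ Bst σ ((i : ℕ) + 1) = 0 then 1 else 0

def hst (σ : Perm (Fin n)) : ℕ :=
  ∑ q : Fin (n+1), if Ast σ (q : ℕ) = 1 ∧ Bst σ (q : ℕ) = 0 then 1 else 0

def est (σ : Perm (Fin n)) : ℕ :=
  ∑ q : Fin (n+1), if Ast σ (q : ℕ) = 0 ∧ Bst σ (q : ℕ) = 1 then 1 else 0

def wst (σ : Perm (Fin n)) : ℕ :=
  ∑ q : Fin (n+1), if Ast σ (q : ℕ) = 1 ∧ Bst σ (q : ℕ) = 1 then 1 else 0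

def sst (σ : Perm (Fin n)) : ℕ := if Ast σ 1 = 0 then 1 else 0

lemma Ast_zero (σ : Perm (Fin n)) : Ast σ 0 = 0 := by
  unfold Ast
  rw [Finset.card_eq_zero]
  apply Finset.filter_false_of_mem
  intro x _
  intro ⟨h1, _, _⟩
  omega

lemma Bst_zero (σ : Perm (Fin n)) : Bst σ 0 = 0 := by
  unfold Bst
  rw [Finset.card_eq_zero]
  apply Finset.filter_false_of_mem
  intro x _
  intro ⟨h1, h2, _⟩
  omega

lemma Bst_one (σ : Perm (Fin n)) : Bst σ 1 = 0 := by
  unfold Bst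
  rw [Finset.card_eq_zero]
  apply Finset.filter_false_of_mem
  intro x _
  intro ⟨h1, h2, _⟩
  omega

lemma countP00 (σ : Perm (Fin n)) :
    (∑ q : Fin (n+1), if Ast σ (q : ℕ) = 0 ∧ Bst σ (q : ℕ) = 0 then 1 else 0) = dp σ + 1 := by
  rw [Fin.sum_univ_succ]
  simp only [Fin.val_zero, Fin.val_succ, Ast_zero, Bst_zero, and_self, if_true]
  rw [dp]
  omega

lemma hst_peel (σ : Perm (Fin n)) :
    hst σ = ∑ i : Fin n, if Ast σ ((i : ℕ) + 1) = 1 ∧ Bst σ ((i : ℕ) + 1) = 0 then 1 else 0 := by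
  rw [hst, Fin.sum_univ_succ]
  simp only [Fin.val_zero, Fin.val_succ, Ast_zero]
  norm_num

lemma peel_sum (m : ℕ) (F : ℕ → ℕ) :
    ∑ q : Fin (m+1), F (q : ℕ) = F 0 + ∑ i : Fin m, F ((i : ℕ) + 1) := by
  rw [Fin.sum_univ_succ]
  congr 1

lemma dp_eq_zero (σ : Perm (Fin n)) (h : Ast σ 1 ≠ 0) : dp σ = 0 := by
  have hne : (Finset.univ.filter (fun ik : Fin n × Fin n =>
      (ik.1 : ℕ) < 1 ∧ 1 ≤ (ik.2 : ℕ) ∧ (σ ik.1 : ℕ) < (σ ik.2 : ℕ))).Nonempty :=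
    Finset.card_pos.mp (Nat.pos_of_ne_zero h)
  obtain ⟨⟨a, k⟩, hmem⟩ := hne
  simp only [Finset.mem_filter, Finset.mem_univ, true_and] at hmem
  obtain ⟨ha, hk, hv⟩ := hmem
  rw [dp]
  apply Finset.sum_eq_zero
  intro i _
  rw [if_neg]
  rintro ⟨hA, hB⟩
  rcases lt_or_ge (k : ℕ) ((i : ℕ) + 1) with hlt | hge
  · have m1 : (a : ℕ) < (k : ℕ) := by omega
    have hpos : 0 < Bst σ ((i : ℕ) + 1) := by
      rw [Bst, Finset.card_pos]
      exact ⟨(a, k), Finset.mem_filter.mpr ⟨Finset.mem_univ _, m1, hlt, hv⟩⟩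
    omega
  · have m1 : (a : ℕ) < (i : ℕ) + 1 := by omega
    have hpos : 0 < Ast σ ((i : ℕ) + 1) := by
      rw [Ast, Finset.card_pos]
      exact ⟨(a, k), Finset.mem_filter.mpr ⟨Finset.mem_univ _, m1, hge, hv⟩⟩
    omega

-- transformation rules for the statistics under insertion

lemma rule_dp_zero (σ : Perm (Fin n)) : dp (ins 0 σ) = dp σ + 1 := by
  rw [← countP00 σ, dp]
  apply Finset.sum_congr rfl
  intro i _
  have hA := Ast_ins_gt 0 σ (i : ℕ) (by simp)
  have hB := Bst_ins_gt 0 σ (i : ℕ) (by simp)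
  simp only [Fin.val_zero, add_zero] at hA hB
  rw [hA, hB]

lemma rule_dp_pos (p : Fin (n+1)) (σ : Perm (Fin n)) (hp : 1 ≤ (p : ℕ)) :
    dp (ins p σ) = 0 := by
  rw [dp]
  apply Finset.sum_eq_zero
  intro i _
  rcases le_or_gt ((i : ℕ) + 1) (p : ℕ) with hle | hgt
  · rw [Ast_ins_le p σ _ hle, if_neg]
    rintro ⟨hA, _⟩
    omega
  · have hB := Bst_ins_gt p σ (i : ℕ) (by omega)
    rw [hB, if_neg]
    rintro ⟨_, hB'⟩
    omega

lemma rule_h_zero (σ : Perm (Fin n)) : hst (ins 0 σ) = hst σ := by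
  rw [hst, peel_sum (n+1) (fun q => if Ast (ins 0 σ) q = 1 ∧ Bst (ins 0 σ) q = 0 then 1 else 0)]
  have t0 : (if Ast (ins 0 σ) 0 = 1 ∧ Bst (ins 0 σ) 0 = 0 then 1 else 0) = 0 := by
    rw [Ast_zero]
    simp
  rw [t0, zero_add, hst]
  apply Finset.sum_congr rfl
  intro i _
  have hA := Ast_ins_gt 0 σ (i : ℕ) (by simp)
  have hB := Bst_ins_gt 0 σ (i : ℕ) (by simp)
  simp only [Fin.val_zero, add_zero] at hA hB
  rw [hA, hB]

lemma rule_h_pos (p : Fin (n+1)) (σ : Perm (Fin n)) (hp : 1 ≤ (p : ℕ)) :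
    hst (ins p σ) = sst σ := by
  rw [hst, Fin.sum_univ_succ, Fin.sum_univ_succ]
  have e0 : (((0 : Fin (n+2))) : ℕ) = 0 := rfl
  have e1 : (((0 : Fin (n+1)).succ : Fin (n+2)) : ℕ) = 1 := rfl
  rw [e0, e1]
  have t0 : (if Ast (ins p σ) 0 = 1 ∧ Bst (ins p σ) 0 = 0 then 1 else 0) = 0 := by
    rw [Ast_zero]
    simp
  have t1 : (if Ast (ins p σ) 1 = 1 ∧ Bst (ins p σ) 1 = 0 then 1 else 0) = sst σ := by
    rw [Ast_ins_le p σ 1 hp, Bst_ins_le p σ 1 hp, Bst_one, sst]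
    by_cases h : Ast σ 1 = 0
    · rw [h]
      simp
    · rw [if_neg (by omega), if_neg h]
  have t2 : ∀ i : Fin n,
      (if Ast (ins p σ) (((i.succ.succ : Fin (n+2))) : ℕ) = 1 ∧
        Bst (ins p σ) (((i.succ.succ : Fin (n+2))) : ℕ) = 0 then 1 else 0) = 0 := by
    intro i
    have ev : (((i.succ.succ : Fin (n+2))) : ℕ) = (i : ℕ) + 2 := rfl
    rw [ev]
    rcases le_or_gt ((i : ℕ) + 2) (p : ℕ) with hle | hgt
    · rw [Ast_ins_le p σ _ hle, if_neg]
      rintro ⟨hA, _⟩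
      omega
    · have hB := Bst_ins_gt p σ ((i : ℕ) + 1) (by omega)
      rw [hB, if_neg]
      rintro ⟨_, hB'⟩
      omega
  rw [t0, t1, Finset.sum_congr rfl (fun i _ => t2 i)]
  simp

lemma rule_e_zero (σ : Perm (Fin n)) : est (ins 0 σ) = est σ := by
  rw [est, peel_sum (n+1) (fun q => if Ast (ins 0 σ) q = 0 ∧ Bst (ins 0 σ) q = 1 then 1 else 0)]
  have t0 : (if Ast (ins 0 σ) 0 = 0 ∧ Bst (ins 0 σ) 0 = 1 then 1 else 0) = 0 := by
    rw [Bst_zero]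
    simp
  rw [t0, zero_add, est]
  apply Finset.sum_congr rfl
  intro i _
  have hA := Ast_ins_gt 0 σ (i : ℕ) (by simp)
  have hB := Bst_ins_gt 0 σ (i : ℕ) (by simp)
  simp only [Fin.val_zero, add_zero] at hA hB
  rw [hA, hB]

lemma rule_e_one (p : Fin (n+1)) (σ : Perm (Fin n)) (hp : (p : ℕ) = 1) :
    est (ins p σ) = dp σ := by
  rw [est, Fin.sum_univ_succ, Fin.sum_univ_succ]
  have e0 : (((0 : Fin (n+2))) : ℕ) = 0 := rfl
  have e1 : (((0 : Fin (n+1)).succ : Fin (n+2)) : ℕ) = 1 := rfl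
  rw [e0, e1]
  have t0 : (if Ast (ins p σ) 0 = 0 ∧ Bst (ins p σ) 0 = 1 then 1 else 0) = 0 := by
    rw [Bst_zero]
    simp
  have t1 : (if Ast (ins p σ) 1 = 0 ∧ Bst (ins p σ) 1 = 1 then 1 else 0) = 0 := by
    rw [Ast_ins_le p σ 1 (by omega), if_neg]
    rintro ⟨hA, _⟩
    omega
  rw [t0, t1, dp]
  simp only [zero_add]
  apply Finset.sum_congr rfl
  intro i _
  have ev : ((i.succ.succ : Fin (n+2)) : ℕ) = (i : ℕ) + 2 := rfl
  rw [ev]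
  have hA := Ast_ins_gt p σ ((i : ℕ) + 1) (by omega)
  have hB := Bst_ins_gt p σ ((i : ℕ) + 1) (by omega)
  rw [hA, hB, hp]
  by_cases h : Ast σ ((i : ℕ) + 1) = 0 ∧ Bst σ ((i : ℕ) + 1) = 0
  · rw [if_pos ⟨h.1, by omega⟩, if_pos h]
  · rw [if_neg, if_neg h]
    rintro ⟨hA', hB'⟩
    exact h ⟨hA', by omega⟩

lemma rule_e_big (p : Fin (n+1)) (σ : Perm (Fin n)) (hp : 2 ≤ (p : ℕ)) :
    est (ins p σ) = 0 := by
  rw [est]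
  apply Finset.sum_eq_zero
  intro q _
  rcases Nat.eq_zero_or_pos (q : ℕ) with h0 | hpos
  · rw [h0, Bst_zero]
    simp
  · obtain ⟨q', hq'⟩ : ∃ q', (q : ℕ) = q' + 1 := ⟨(q : ℕ) - 1, by omega⟩
    rw [hq']
    rcases le_or_gt (q' + 1) (p : ℕ) with hle | hgt
    · rw [Ast_ins_le p σ _ hle, if_neg]
      rintro ⟨hA, _⟩
      omega
    · rw [Bst_ins_gt p σ q' (by omega), if_neg]
      rintro ⟨_, hB⟩
      omega

lemma rule_w_zero (σ : Perm (Fin n)) : wst (ins 0 σ) = wst σ := by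
  rw [wst, peel_sum (n+1) (fun q => if Ast (ins 0 σ) q = 1 ∧ Bst (ins 0 σ) q = 1 then 1 else 0)]
  have t0 : (if Ast (ins 0 σ) 0 = 1 ∧ Bst (ins 0 σ) 0 = 1 then 1 else 0) = 0 := by
    rw [Ast_zero]
    simp
  rw [t0, zero_add, wst]
  apply Finset.sum_congr rfl
  intro i _
  have hA := Ast_ins_gt 0 σ (i : ℕ) (by simp)
  have hB := Bst_ins_gt 0 σ (i : ℕ) (by simp)
  simp only [Fin.val_zero, add_zero] at hA hB
  rw [hA, hB]

lemma rule_w_one (p : Fin (n+1)) (σ : Perm (Fin n)) (hp : (p : ℕ) = 1) :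
    wst (ins p σ) = hst σ := by
  rw [wst, Fin.sum_univ_succ, Fin.sum_univ_succ]
  have e0 : (((0 : Fin (n+2))) : ℕ) = 0 := rfl
  have e1 : (((0 : Fin (n+1)).succ : Fin (n+2)) : ℕ) = 1 := rfl
  rw [e0, e1]
  have t0 : (if Ast (ins p σ) 0 = 1 ∧ Bst (ins p σ) 0 = 1 then 1 else 0) = 0 := by
    rw [Ast_zero]
    simp
  have t1 : (if Ast (ins p σ) 1 = 1 ∧ Bst (ins p σ) 1 = 1 then 1 else 0) = 0 := by
    rw [Bst_ins_le p σ 1 (by omega), Bst_one, if_neg]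
    rintro ⟨_, hB⟩
    omega
  rw [t0, t1, hst_peel σ]
  simp only [zero_add]
  apply Finset.sum_congr rfl
  intro i _
  have ev : ((i.succ.succ : Fin (n+2)) : ℕ) = (i : ℕ) + 2 := rfl
  rw [ev]
  have hA := Ast_ins_gt p σ ((i : ℕ) + 1) (by omega)
  have hB := Bst_ins_gt p σ ((i : ℕ) + 1) (by omega)
  rw [hA, hB, hp]
  by_cases h : Ast σ ((i : ℕ) + 1) = 1 ∧ Bst σ ((i : ℕ) + 1) = 0
  · rw [if_pos ⟨h.1, by omega⟩, if_pos h]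
  · rw [if_neg, if_neg h]
    rintro ⟨hA', hB'⟩
    exact h ⟨hA', by omega⟩

lemma rule_w_big (p : Fin (n+1)) (σ : Perm (Fin n)) (hp : 2 ≤ (p : ℕ)) :
    wst (ins p σ) = 0 := by
  rw [wst]
  apply Finset.sum_eq_zero
  intro q _
  rcases Nat.eq_zero_or_pos (q : ℕ) with h0 | hpos
  · rw [h0, Ast_zero]
    simp
  · obtain ⟨q', hq'⟩ : ∃ q', (q : ℕ) = q' + 1 := ⟨(q : ℕ) - 1, by omega⟩
    rw [hq']
    rcases le_or_gt (q' + 1) (p : ℕ) with hle | hgt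
    · rcases Nat.eq_zero_or_pos q' with h0' | hpos'
      · rw [h0', Bst_ins_le p σ 1 (by omega), Bst_one, if_neg]
        rintro ⟨_, hB⟩
        omega
      · rw [Ast_ins_le p σ _ hle, if_neg]
        rintro ⟨hA, _⟩
        omega
    · rw [Bst_ins_gt p σ q' (by omega), if_neg]
      rintro ⟨_, hB⟩
      omega

lemma rule_s_zero (σ : Perm (Fin n)) : sst (ins 0 σ) = 1 := by
  rw [sst]
  have hA := Ast_ins_gt 0 σ 0 (by simp)
  simp only [Fin.val_zero, zero_add] at hA
  rw [hA, Ast_zero]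
  simp

lemma rule_s_pos (p : Fin (n+1)) (σ : Perm (Fin n)) (hp : 1 ≤ (p : ℕ)) :
    sst (ins p σ) = 0 := by
  rw [sst, Ast_ins_le p σ 1 hp, if_neg]
  omega

end S19

namespace S19

variable {n : ℕ}

lemma val_succ_pos (i : Fin n) : 1 ≤ ((i.succ : Fin (n+1)) : ℕ) := by
  rw [Fin.val_succ]; omega

lemma T1_00 (σ : Perm (Fin n)) :
    (∑ p : Fin (n+1), if Ast σ (p : ℕ) = 0 ∧ Bst σ (p : ℕ) = 0 then 1 else 0) = dp σ + 1 :=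
  countP00 σ

lemma T1_10 (σ : Perm (Fin n)) :
    (∑ p : Fin (n+1), if Ast σ (p : ℕ) = 1 ∧ Bst σ (p : ℕ) = 0 then 1 else 0) = hst σ := rfl

lemma T1_01 (σ : Perm (Fin n)) :
    (∑ p : Fin (n+1), if Ast σ (p : ℕ) = 0 ∧ Bst σ (p : ℕ) = 1 then 1 else 0) = est σ := rfl

lemma T1_11 (σ : Perm (Fin n)) :
    (∑ p : Fin (n+1), if Ast σ (p : ℕ) = 1 ∧ Bst σ (p : ℕ) = 1 then 1 else 0) = wst σ := rfl

lemma Tdp_00 (σ : Perm (Fin n)) :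
    (∑ p : Fin (n+1), if Ast σ (p : ℕ) = 0 ∧ Bst σ (p : ℕ) = 0 then dp (ins p σ) else 0)
      = dp σ + 1 := by
  rw [Fin.sum_univ_succ]
  have h0 : (if Ast σ ((0 : Fin (n+1)) : ℕ) = 0 ∧ Bst σ ((0 : Fin (n+1)) : ℕ) = 0
      then dp (ins 0 σ) else 0) = dp σ + 1 := by
    rw [Fin.val_zero, Ast_zero, Bst_zero, if_pos ⟨rfl, rfl⟩, rule_dp_zero]
  rw [h0]
  have htail : ∀ i : Fin n, (if Ast σ ((i.succ : Fin (n+1)) : ℕ) = 0 ∧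
      Bst σ ((i.succ : Fin (n+1)) : ℕ) = 0 then dp (ins i.succ σ) else 0) = 0 := by
    intro i
    rw [rule_dp_pos i.succ σ (val_succ_pos i)]
    simp
  rw [Finset.sum_congr rfl (fun i _ => htail i)]
  simp

lemma Tdp_ne (σ : Perm (Fin n)) (a b : ℕ) (hab : ¬(a = 0 ∧ b = 0)) :
    (∑ p : Fin (n+1), if Ast σ (p : ℕ) = a ∧ Bst σ (p : ℕ) = b then dp (ins p σ) else 0)
      = 0 := by
  rw [Fin.sum_univ_succ]
  have h0 : (if Ast σ ((0 : Fin (n+1)) : ℕ) = a ∧ Bst σ ((0 : Fin (n+1)) : ℕ) = b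
      then dp (ins 0 σ) else 0) = 0 := by
    rw [Fin.val_zero, Ast_zero, Bst_zero, if_neg]
    intro ⟨h1, h2⟩
    exact hab ⟨h1.symm, h2.symm⟩
  rw [h0]
  have htail : ∀ i : Fin n, (if Ast σ ((i.succ : Fin (n+1)) : ℕ) = a ∧
      Bst σ ((i.succ : Fin (n+1)) : ℕ) = b then dp (ins i.succ σ) else 0) = 0 := by
    intro i
    rw [rule_dp_pos i.succ σ (val_succ_pos i)]
    simp
  rw [Finset.sum_congr rfl (fun i _ => htail i)]
  simp

lemma Th_00 (σ : Perm (Fin n)) :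
    (∑ p : Fin (n+1), if Ast σ (p : ℕ) = 0 ∧ Bst σ (p : ℕ) = 0 then hst (ins p σ) else 0)
      = hst σ + dp σ := by
  rw [Fin.sum_univ_succ]
  have h0 : (if Ast σ ((0 : Fin (n+1)) : ℕ) = 0 ∧ Bst σ ((0 : Fin (n+1)) : ℕ) = 0
      then hst (ins 0 σ) else 0) = hst σ := by
    rw [Fin.val_zero, Ast_zero, Bst_zero, if_pos ⟨rfl, rfl⟩, rule_h_zero]
  rw [h0]
  congr 1
  have htail : ∀ i : Fin n, (if Ast σ ((i.succ : Fin (n+1)) : ℕ) = 0 ∧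
      Bst σ ((i.succ : Fin (n+1)) : ℕ) = 0 then hst (ins i.succ σ) else 0)
      = (if Ast σ ((i : ℕ) + 1) = 0 ∧ Bst σ ((i : ℕ) + 1) = 0 then sst σ else 0) := by
    intro i
    rw [rule_h_pos i.succ σ (val_succ_pos i), Fin.val_succ]
  rw [Finset.sum_congr rfl (fun i _ => htail i)]
  by_cases hs : Ast σ 1 = 0
  · have : sst σ = 1 := by rw [sst, if_pos hs]
    rw [this, dp]
  · have h1 : sst σ = 0 := by rw [sst, if_neg hs]
    rw [h1, dp_eq_zero σ hs]
    apply Finset.sum_eq_zero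
    intro i _
    simp

lemma Th_01 (σ : Perm (Fin n)) :
    (∑ p : Fin (n+1), if Ast σ (p : ℕ) = 0 ∧ Bst σ (p : ℕ) = 1 then hst (ins p σ) else 0)
      = est σ * sst σ := by
  rw [Fin.sum_univ_succ]
  have h0 : (if Ast σ ((0 : Fin (n+1)) : ℕ) = 0 ∧ Bst σ ((0 : Fin (n+1)) : ℕ) = 1
      then hst (ins 0 σ) else 0) = 0 := by
    rw [Fin.val_zero, Bst_zero, if_neg]
    intro ⟨_, h2⟩
    omega
  rw [h0, zero_add]
  have htail : ∀ i : Fin n, (if Ast σ ((i.succ : Fin (n+1)) : ℕ) = 0 ∧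
      Bst σ ((i.succ : Fin (n+1)) : ℕ) = 1 then hst (ins i.succ σ) else 0)
      = (if Ast σ ((i : ℕ) + 1) = 0 ∧ Bst σ ((i : ℕ) + 1) = 1 then sst σ else 0) := by
    intro i
    rw [rule_h_pos i.succ σ (val_succ_pos i), Fin.val_succ]
  rw [Finset.sum_congr rfl (fun i _ => htail i)]
  have hest : est σ = ∑ i : Fin n, if Ast σ ((i : ℕ) + 1) = 0 ∧ Bst σ ((i : ℕ) + 1) = 1
      then 1 else 0 := by
    rw [est, peel_sum n (fun q => if Ast σ q = 0 ∧ Bst σ q = 1 then 1 else 0), Bst_zero]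
    simp
  by_cases hs : Ast σ 1 = 0
  · have h1 : sst σ = 1 := by rw [sst, if_pos hs]
    rw [h1, hest, mul_one]
  · have h1 : sst σ = 0 := by rw [sst, if_neg hs]
    rw [h1, mul_zero]
    apply Finset.sum_eq_zero
    intro i _
    simp

lemma collapse_sum (c : ℕ) :
    (∑ i : Fin n, if (i : ℕ) = 0 then c else 0) = if 0 < n then c else 0 := by
  rw [Fin.sum_univ_eq_sum_range (fun j => if j = 0 then c else 0) n,
    Finset.sum_ite_eq' (Finset.range n) 0 (fun _ => c)]
  by_cases h : 0 < n
  · rw [if_pos (Finset.mem_range.mpr h), if_pos h]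
  · rw [if_neg (fun hc => h (Finset.mem_range.mp hc)), if_neg h]

lemma Te_00 (σ : Perm (Fin n)) :
    (∑ p : Fin (n+1), if Ast σ (p : ℕ) = 0 ∧ Bst σ (p : ℕ) = 0 then est (ins p σ) else 0)
      = est σ + dp σ := by
  rw [Fin.sum_univ_succ]
  have h0 : (if Ast σ ((0 : Fin (n+1)) : ℕ) = 0 ∧ Bst σ ((0 : Fin (n+1)) : ℕ) = 0
      then est (ins 0 σ) else 0) = est σ := by
    rw [Fin.val_zero, Ast_zero, Bst_zero, if_pos ⟨rfl, rfl⟩, rule_e_zero]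
  rw [h0]
  congr 1
  have htail : ∀ i : Fin n, (if Ast σ ((i.succ : Fin (n+1)) : ℕ) = 0 ∧
      Bst σ ((i.succ : Fin (n+1)) : ℕ) = 0 then est (ins i.succ σ) else 0)
      = (if (i : ℕ) = 0 then (if Ast σ 1 = 0 then dp σ else 0) else 0) := by
    intro i
    rcases Nat.eq_zero_or_pos (i : ℕ) with h0' | hpos
    · have hv : ((i.succ : Fin (n+1)) : ℕ) = 1 := by rw [Fin.val_succ, h0']
      rw [hv, rule_e_one i.succ σ hv, if_pos h0', Bst_one]
      by_cases hs : Ast σ 1 = 0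
      · rw [if_pos ⟨hs, rfl⟩, if_pos hs]
      · rw [if_neg (fun hc => hs hc.1), if_neg hs]
    · have hv : 2 ≤ ((i.succ : Fin (n+1)) : ℕ) := by rw [Fin.val_succ]; omega
      rw [rule_e_big i.succ σ hv]
      have hni : ¬ ((i : ℕ) = 0) := by omega
      simp [hni]
  rw [Finset.sum_congr rfl (fun i _ => htail i), collapse_sum]
  rcases Nat.eq_zero_or_pos n with hn | hn
  · subst hn
    rw [if_neg (by omega)]
    rw [dp]
    rw [Finset.sum_of_isEmpty]
  · rw [if_pos hn]
    by_cases hs : Ast σ 1 = 0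
    · rw [if_pos hs]
    · rw [if_neg hs, dp_eq_zero σ hs]

lemma Te_10 (σ : Perm (Fin n)) :
    (∑ p : Fin (n+1), if Ast σ (p : ℕ) = 1 ∧ Bst σ (p : ℕ) = 0 then est (ins p σ) else 0)
      = 0 := by
  apply Finset.sum_eq_zero
  intro p _
  rcases Nat.lt_or_ge (p : ℕ) 1 with h0 | h1
  · have : (p : ℕ) = 0 := by omega
    rw [this, Ast_zero, if_neg (by omega)]
  · rcases Nat.lt_or_ge (p : ℕ) 2 with h1' | h2
    · have hv : (p : ℕ) = 1 := by omega
      rw [hv, rule_e_one p σ hv]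
      by_cases hc : Ast σ 1 = 1 ∧ Bst σ 1 = 0
      · rw [if_pos hc, dp_eq_zero σ (by omega)]
      · rw [if_neg hc]
    · rw [rule_e_big p σ h2]
      simp

lemma Tw_00 (σ : Perm (Fin n)) :
    (∑ p : Fin (n+1), if Ast σ (p : ℕ) = 0 ∧ Bst σ (p : ℕ) = 0 then wst (ins p σ) else 0)
      = wst σ + sst σ * hst σ := by
  rw [Fin.sum_univ_succ]
  have h0 : (if Ast σ ((0 : Fin (n+1)) : ℕ) = 0 ∧ Bst σ ((0 : Fin (n+1)) : ℕ) = 0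
      then wst (ins 0 σ) else 0) = wst σ := by
    rw [Fin.val_zero, Ast_zero, Bst_zero, if_pos ⟨rfl, rfl⟩, rule_w_zero]
  rw [h0]
  congr 1
  have htail : ∀ i : Fin n, (if Ast σ ((i.succ : Fin (n+1)) : ℕ) = 0 ∧
      Bst σ ((i.succ : Fin (n+1)) : ℕ) = 0 then wst (ins i.succ σ) else 0)
      = (if (i : ℕ) = 0 then (if Ast σ 1 = 0 then hst σ else 0) else 0) := by
    intro i
    rcases Nat.eq_zero_or_pos (i : ℕ) with h0' | hpos
    · have hv : ((i.succ : Fin (n+1)) : ℕ) = 1 := by rw [Fin.val_succ, h0']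
      rw [hv, rule_w_one i.succ σ hv, if_pos h0', Bst_one]
      by_cases hs : Ast σ 1 = 0
      · rw [if_pos ⟨hs, rfl⟩, if_pos hs]
      · rw [if_neg (fun hc => hs hc.1), if_neg hs]
    · have hv : 2 ≤ ((i.succ : Fin (n+1)) : ℕ) := by rw [Fin.val_succ]; omega
      rw [rule_w_big i.succ σ hv]
      have hni : ¬ ((i : ℕ) = 0) := by omega
      simp [hni]
  rw [Finset.sum_congr rfl (fun i _ => htail i), collapse_sum]
  rcases Nat.eq_zero_or_pos n with hn | hn
  · subst hn
    rw [if_neg (by omega)]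
    have : hst σ = 0 := by
      rw [hst, Fin.sum_univ_succ]
      rw [Fin.val_zero, Ast_zero, if_neg (by omega)]
      rw [Finset.sum_of_isEmpty]
      omega
    rw [this, mul_zero]
  · rw [if_pos hn]
    by_cases hs : Ast σ 1 = 0
    · rw [if_pos hs, sst, if_pos hs, one_mul]
    · rw [if_neg hs, sst, if_neg hs, zero_mul]

lemma Tsh_00 (σ : Perm (Fin n)) :
    (∑ p : Fin (n+1), if Ast σ (p : ℕ) = 0 ∧ Bst σ (p : ℕ) = 0
      then sst (ins p σ) * hst (ins p σ) else 0) = hst σ := by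
  rw [Fin.sum_univ_succ]
  have h0 : (if Ast σ ((0 : Fin (n+1)) : ℕ) = 0 ∧ Bst σ ((0 : Fin (n+1)) : ℕ) = 0
      then sst (ins 0 σ) * hst (ins 0 σ) else 0) = hst σ := by
    rw [Fin.val_zero, Ast_zero, Bst_zero, if_pos ⟨rfl, rfl⟩, rule_s_zero, rule_h_zero, one_mul]
  rw [h0]
  have htail : ∀ i : Fin n, (if Ast σ ((i.succ : Fin (n+1)) : ℕ) = 0 ∧
      Bst σ ((i.succ : Fin (n+1)) : ℕ) = 0 then sst (ins i.succ σ) * hst (ins i.succ σ) else 0)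
      = 0 := by
    intro i
    rw [rule_s_pos i.succ σ (val_succ_pos i), zero_mul]
    simp
  rw [Finset.sum_congr rfl (fun i _ => htail i)]
  simp

lemma Tes_00 (σ : Perm (Fin n)) :
    (∑ p : Fin (n+1), if Ast σ (p : ℕ) = 0 ∧ Bst σ (p : ℕ) = 0
      then est (ins p σ) * sst (ins p σ) else 0) = est σ := by
  rw [Fin.sum_univ_succ]
  have h0 : (if Ast σ ((0 : Fin (n+1)) : ℕ) = 0 ∧ Bst σ ((0 : Fin (n+1)) : ℕ) = 0
      then est (ins 0 σ) * sst (ins 0 σ) else 0) = est σ := by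
    rw [Fin.val_zero, Ast_zero, Bst_zero, if_pos ⟨rfl, rfl⟩, rule_s_zero, rule_e_zero, mul_one]
  rw [h0]
  have htail : ∀ i : Fin n, (if Ast σ ((i.succ : Fin (n+1)) : ℕ) = 0 ∧
      Bst σ ((i.succ : Fin (n+1)) : ℕ) = 0 then est (ins i.succ σ) * sst (ins i.succ σ) else 0)
      = 0 := by
    intro i
    rw [rule_s_pos i.succ σ (val_succ_pos i), mul_zero]
    simp
  rw [Finset.sum_congr rfl (fun i _ => htail i)]
  simp

end S19

namespace S19

variable {n : ℕ}

def cN (a b m : ℕ) : ℕ := ∑ σ : Perm (Fin m), if c2 σ = a ∧ c3 σ = b then 1 else 0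
def cDP (a b m : ℕ) : ℕ := ∑ σ : Perm (Fin m), if c2 σ = a ∧ c3 σ = b then dp σ else 0
def cH (a b m : ℕ) : ℕ := ∑ σ : Perm (Fin m), if c2 σ = a ∧ c3 σ = b then hst σ else 0
def cE (a b m : ℕ) : ℕ := ∑ σ : Perm (Fin m), if c2 σ = a ∧ c3 σ = b then est σ else 0
def cW (a b m : ℕ) : ℕ := ∑ σ : Perm (Fin m), if c2 σ = a ∧ c3 σ = b then wst σ else 0
def cSH (a b m : ℕ) : ℕ :=
  ∑ σ : Perm (Fin m), if c2 σ = a ∧ c3 σ = b then sst σ * hst σ else 0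
def cES (a b m : ℕ) : ℕ :=
  ∑ σ : Perm (Fin m), if c2 σ = a ∧ c3 σ = b then est σ * sst σ else 0

lemma master_sum (f : Perm (Fin (n+1)) → ℕ) (a b : ℕ) :
    (∑ π : Perm (Fin (n+1)), if c2 π = a ∧ c3 π = b then f π else 0)
    = ∑ σ : Perm (Fin n), ∑ p : Fin (n+1),
        if c2 σ + Ast σ (p : ℕ) = a ∧ c3 σ + Bst σ (p : ℕ) = b then f (ins p σ) else 0 := by
  rw [sum_ins (fun π => if c2 π = a ∧ c3 π = b then f π else 0), Finset.sum_comm]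
  apply Finset.sum_congr rfl
  intro σ _
  apply Finset.sum_congr rfl
  intro p _
  rw [c2_ins, c3_ins]

lemma ite_split (c : Prop) [Decidable c] (x y : ℕ) :
    (if c then x + y else 0) = (if c then x else 0) + (if c then y else 0) := by
  by_cases h : c <;> simp [h]

lemma split00 (σ : Perm (Fin n)) (F : Fin (n+1) → ℕ) :
    (∑ p : Fin (n+1), if c2 σ + Ast σ (p : ℕ) = 0 ∧ c3 σ + Bst σ (p : ℕ) = 0
        then F p else 0)
    = (if c2 σ = 0 ∧ c3 σ = 0 then
        (∑ p : Fin (n+1), if Ast σ (p : ℕ) = 0 ∧ Bst σ (p : ℕ) = 0 then F p else 0) else 0)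
    := by
  by_cases h1 : c2 σ = 0 ∧ c3 σ = 0
  · rw [if_pos h1]
    apply Finset.sum_congr rfl
    intro p _
    apply if_congr _ rfl rfl
    omega
  · rw [if_neg h1]
    apply Finset.sum_eq_zero
    intro p _
    rw [if_neg]
    omega

lemma split10 (σ : Perm (Fin n)) (F : Fin (n+1) → ℕ) :
    (∑ p : Fin (n+1), if c2 σ + Ast σ (p : ℕ) = 1 ∧ c3 σ + Bst σ (p : ℕ) = 0
        then F p else 0)
    = (if c2 σ = 0 ∧ c3 σ = 0 then
        (∑ p : Fin (n+1), if Ast σ (p : ℕ) = 1 ∧ Bst σ (p : ℕ) = 0 then F p else 0) else 0)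
    + (if c2 σ = 1 ∧ c3 σ = 0 then
        (∑ p : Fin (n+1), if Ast σ (p : ℕ) = 0 ∧ Bst σ (p : ℕ) = 0 then F p else 0) else 0)
    := by
  by_cases h1 : c2 σ = 0 ∧ c3 σ = 0
  · rw [if_pos h1, if_neg (by omega), add_zero]
    apply Finset.sum_congr rfl
    intro p _
    apply if_congr _ rfl rfl
    omega
  · rw [if_neg h1]
    by_cases h2 : c2 σ = 1 ∧ c3 σ = 0
    · rw [if_pos h2, zero_add]
      apply Finset.sum_congr rfl
      intro p _
      apply if_congr _ rfl rfl
      omega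
    · rw [if_neg h2, add_zero]
      apply Finset.sum_eq_zero
      intro p _
      rw [if_neg]
      omega

lemma split01 (σ : Perm (Fin n)) (F : Fin (n+1) → ℕ) :
    (∑ p : Fin (n+1), if c2 σ + Ast σ (p : ℕ) = 0 ∧ c3 σ + Bst σ (p : ℕ) = 1
        then F p else 0)
    = (if c2 σ = 0 ∧ c3 σ = 0 then
        (∑ p : Fin (n+1), if Ast σ (p : ℕ) = 0 ∧ Bst σ (p : ℕ) = 1 then F p else 0) else 0)
    + (if c2 σ = 0 ∧ c3 σ = 1 then
        (∑ p : Fin (n+1), if Ast σ (p : ℕ) = 0 ∧ Bst σ (p : ℕ) = 0 then F p else 0) else 0)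
    := by
  by_cases h1 : c2 σ = 0 ∧ c3 σ = 0
  · rw [if_pos h1, if_neg (by omega), add_zero]
    apply Finset.sum_congr rfl
    intro p _
    apply if_congr _ rfl rfl
    omega
  · rw [if_neg h1]
    by_cases h2 : c2 σ = 0 ∧ c3 σ = 1
    · rw [if_pos h2, zero_add]
      apply Finset.sum_congr rfl
      intro p _
      apply if_congr _ rfl rfl
      omega
    · rw [if_neg h2, add_zero]
      apply Finset.sum_eq_zero
      intro p _
      rw [if_neg]
      omega

lemma split11 (σ : Perm (Fin n)) (F : Fin (n+1) → ℕ) :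
    (∑ p : Fin (n+1), if c2 σ + Ast σ (p : ℕ) = 1 ∧ c3 σ + Bst σ (p : ℕ) = 1
        then F p else 0)
    = (if c2 σ = 0 ∧ c3 σ = 0 then
        (∑ p : Fin (n+1), if Ast σ (p : ℕ) = 1 ∧ Bst σ (p : ℕ) = 1 then F p else 0) else 0)
    + (if c2 σ = 1 ∧ c3 σ = 0 then
        (∑ p : Fin (n+1), if Ast σ (p : ℕ) = 0 ∧ Bst σ (p : ℕ) = 1 then F p else 0) else 0)
    + (if c2 σ = 0 ∧ c3 σ = 1 then
        (∑ p : Fin (n+1), if Ast σ (p : ℕ) = 1 ∧ Bst σ (p : ℕ) = 0 then F p else 0) else 0)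
    + (if c2 σ = 1 ∧ c3 σ = 1 then
        (∑ p : Fin (n+1), if Ast σ (p : ℕ) = 0 ∧ Bst σ (p : ℕ) = 0 then F p else 0) else 0)
    := by
  by_cases h1 : c2 σ = 0 ∧ c3 σ = 0
  · rw [if_pos h1, if_neg (by omega), if_neg (by omega), if_neg (by omega)]
    simp only [add_zero]
    apply Finset.sum_congr rfl
    intro p _
    apply if_congr _ rfl rfl
    omega
  · by_cases h2 : c2 σ = 1 ∧ c3 σ = 0
    · rw [if_neg h1, if_pos h2, if_neg (by omega), if_neg (by omega)]
      simp only [zero_add, add_zero]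
      apply Finset.sum_congr rfl
      intro p _
      apply if_congr _ rfl rfl
      omega
    · by_cases h3 : c2 σ = 0 ∧ c3 σ = 1
      · rw [if_neg h1, if_neg h2, if_pos h3, if_neg (by omega)]
        simp only [zero_add, add_zero]
        apply Finset.sum_congr rfl
        intro p _
        apply if_congr _ rfl rfl
        omega
      · by_cases h4 : c2 σ = 1 ∧ c3 σ = 1
        · rw [if_neg h1, if_neg h2, if_neg h3, if_pos h4]
          simp only [zero_add]
          apply Finset.sum_congr rfl
          intro p _
          apply if_congr _ rfl rfl
          omega
        · rw [if_neg h1, if_neg h2, if_neg h3, if_neg h4]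
          simp only [add_zero]
          apply Finset.sum_eq_zero
          intro p _
          rw [if_neg]
          omega

end S19

namespace S19

variable {n : ℕ}

-- class (0,0)
lemma rec_N00 : cN 0 0 (n+1) = cN 0 0 n + cDP 0 0 n := by
  rw [cN]
  simp only [master_sum, split00, T1_00, ite_split]
  simp only [Finset.sum_add_distrib]
  rw [cN, cDP]
  try omega

lemma rec_DP00 : cDP 0 0 (n+1) = cDP 0 0 n + cN 0 0 n := by
  rw [cDP]
  simp only [master_sum, split00, Tdp_00, ite_split]
  simp only [Finset.sum_add_distrib]
  rw [cN, cDP]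
  try omega

lemma rec_H00 : cH 0 0 (n+1) = cH 0 0 n + cDP 0 0 n := by
  rw [cH]
  simp only [master_sum, split00, Th_00, ite_split]
  simp only [Finset.sum_add_distrib]
  rw [cH, cDP]
  try omega

lemma rec_E00 : cE 0 0 (n+1) = cE 0 0 n + cDP 0 0 n := by
  rw [cE]
  simp only [master_sum, split00, Te_00, ite_split]
  simp only [Finset.sum_add_distrib]
  rw [cE, cDP]
  try omega

lemma rec_SH00 : cSH 0 0 (n+1) = cH 0 0 n := by
  rw [cSH]
  simp only [master_sum, split00, Tsh_00]
  rw [cH]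

lemma rec_W00 : cW 0 0 (n+1) = cW 0 0 n + cSH 0 0 n := by
  rw [cW]
  simp only [master_sum, split00, Tw_00, ite_split]
  simp only [Finset.sum_add_distrib]
  rw [cW, cSH]
  try omega

lemma rec_ES00 : cES 0 0 (n+1) = cE 0 0 n := by
  rw [cES]
  simp only [master_sum, split00, Tes_00]
  rw [cE]

-- class (1,0)
lemma rec_N10 : cN 1 0 (n+1) = cH 0 0 n + cN 1 0 n + cDP 1 0 n := by
  rw [cN]
  simp only [master_sum, split10, T1_10, T1_00, ite_split]
  simp only [Finset.sum_add_distrib]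
  rw [cH, cN, cDP]
  try omega

lemma rec_DP10 : cDP 1 0 (n+1) = cDP 1 0 n + cN 1 0 n := by
  rw [cDP]
  simp only [master_sum, split10, Tdp_00, Tdp_ne _ 1 0 (by omega), ite_split]
  simp only [Finset.sum_add_distrib]
  rw [cN, cDP]
  try simp only [ite_self, Finset.sum_const_zero, zero_add]
  try omega

lemma rec_E10 : cE 1 0 (n+1) = cE 1 0 n + cDP 1 0 n := by
  rw [cE]
  simp only [master_sum, split10, Te_10, Te_00, ite_split]
  simp only [Finset.sum_add_distrib]
  rw [cE, cDP]
  try simp only [ite_self, Finset.sum_const_zero]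
  try omega

-- class (0,1)
lemma rec_N01 : cN 0 1 (n+1) = cE 0 0 n + cN 0 1 n + cDP 0 1 n := by
  rw [cN]
  simp only [master_sum, split01, T1_01, T1_00, ite_split]
  simp only [Finset.sum_add_distrib]
  rw [cE, cN, cDP]
  try omega

lemma rec_DP01 : cDP 0 1 (n+1) = cDP 0 1 n + cN 0 1 n := by
  rw [cDP]
  simp only [master_sum, split01, Tdp_00, Tdp_ne _ 0 1 (by omega), ite_split]
  simp only [Finset.sum_add_distrib]
  rw [cN, cDP]
  try simp only [ite_self, Finset.sum_const_zero]
  try omega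

lemma rec_H01 : cH 0 1 (n+1) = cES 0 0 n + cH 0 1 n + cDP 0 1 n := by
  rw [cH]
  simp only [master_sum, split01, Th_01, Th_00, ite_split]
  simp only [Finset.sum_add_distrib]
  rw [cES, cH, cDP]
  try omega

-- class (1,1)
lemma rec_N11 : cN 1 1 (n+1) = cW 0 0 n + cE 1 0 n + cH 0 1 n + cN 1 1 n + cDP 1 1 n := by
  rw [cN]
  simp only [master_sum, split11, T1_11, T1_01, T1_10, T1_00, ite_split]
  simp only [Finset.sum_add_distrib]
  rw [cW, cE, cH, cN, cDP]
  try omega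

lemma rec_DP11 : cDP 1 1 (n+1) = cDP 1 1 n + cN 1 1 n := by
  rw [cDP]
  simp only [master_sum, split11, Tdp_00, Tdp_ne _ 1 1 (by omega), Tdp_ne _ 0 1 (by omega),
    Tdp_ne _ 1 0 (by omega), ite_split]
  simp only [Finset.sum_add_distrib]
  rw [cN, cDP]
  try simp only [ite_self, Finset.sum_const_zero]
  try omega

end S19

namespace S19

def fN00 : ℕ → ℕ := fun n => 2^(n-1)
def fDP00 : ℕ → ℕ | 0 => 0 | n+1 => 2^n
def fH00 : ℕ → ℕ | 0 => 0 | n+1 => 2^n - 1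
def fSH00 : ℕ → ℕ | 0 => 0 | 1 => 0 | n+2 => 2^n - 1
def fW00 : ℕ → ℕ | 0 => 0 | 1 => 0 | n+2 => 2^n - 1 - n
def fN10 : ℕ → ℕ | 0 => 0 | 1 => 0 | 2 => 0 | n+3 => (n+1)*2^n
def fDP10 : ℕ → ℕ | 0 => 0 | 1 => 0 | 2 => 0 | 3 => 0 | n+4 => n*2^(n+1)+1
def fE10 : ℕ → ℕ | 0 => 0 | 1 => 0 | 2 => 0 | 3 => 0 | 4 => 0 | 5 => 1 | n+6 => n*2^(n+3) + n + 6
def fN11 : ℕ → ℕ | 0 => 0 | 1 => 0 | 2 => 0 | 3 => 0 | 4 => 0 | n+5 => (n+2)*(n+1)*2^n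
def fDP11 : ℕ → ℕ | 0 => 0 | 1 => 0 | 2 => 0 | 3 => 0 | 4 => 0 | n+5 => (n*n - n + 2)*2^n - 2

lemma otp (k : ℕ) : 1 ≤ 2^k := Nat.one_le_two_pow

lemma le_sq (m : ℕ) : m ≤ m * m := by
  rcases m with _ | k
  · simp
  · exact Nat.le_mul_of_pos_left _ (Nat.succ_pos k)

lemma aN00 (n : ℕ) : fN00 (n+1) = fN00 n + fDP00 n := by
  rcases n with _ | m
  · decide
  · have e1 : fN00 (m+1+1) = 2^(m+1) := rfl
    have e2 : fN00 (m+1) = 2^m := rfl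
    have e3 : fDP00 (m+1) = 2^m := rfl
    rw [e1, e2, e3, pow_succ]
    omega

lemma aDP00 (n : ℕ) : fDP00 (n+1) = fDP00 n + fN00 n := by
  rcases n with _ | m
  · decide
  · have e1 : fDP00 (m+1+1) = 2^(m+1) := rfl
    have e2 : fDP00 (m+1) = 2^m := rfl
    have e3 : fN00 (m+1) = 2^m := rfl
    rw [e1, e2, e3, pow_succ]
    omega

lemma aH00 (n : ℕ) : fH00 (n+1) = fH00 n + fDP00 n := by
  rcases n with _ | m
  · decide
  · have e1 : fH00 (m+1+1) = 2^(m+1) - 1 := rfl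
    have e2 : fH00 (m+1) = 2^m - 1 := rfl
    have e3 : fDP00 (m+1) = 2^m := rfl
    have h := otp m
    rw [e1, e2, e3, pow_succ]
    omega

lemma aSH00 (n : ℕ) : fSH00 (n+1) = fH00 n := by
  rcases n with _ | m
  · decide
  · rfl

lemma aW00 (n : ℕ) : fW00 (n+1) = fW00 n + fSH00 n := by
  rcases n with _ | _ | m
  · decide
  · decide
  · have e1 : fW00 (m+2+1) = 2^(m+1) - 1 - (m+1) := rfl
    have e2 : fW00 (m+2) = 2^m - 1 - m := rfl
    have e3 : fSH00 (m+2) = 2^m - 1 := rfl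
    have h1 := Nat.lt_two_pow_self (n := m)
    rw [e1, e2, e3, pow_succ]
    omega

lemma aN10 (n : ℕ) : fN10 (n+1) = fH00 n + fN10 n + fDP10 n := by
  rcases n with _ | _ | _ | _ | m
  · decide
  · decide
  · decide
  · decide
  · have e1 : fN10 (m+4+1) = (m+3)*2^(m+2) := rfl
    have e2 : fH00 (m+4) = 2^(m+3) - 1 := rfl
    have e3 : fN10 (m+4) = (m+2)*2^(m+1) := rfl
    have e4 : fDP10 (m+4) = m*2^(m+1)+1 := rfl
    have h := otp (m+3)
    rw [e1, e2, e3, e4]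
    zify [h]
    ring

lemma aDP10 (n : ℕ) : fDP10 (n+1) = fDP10 n + fN10 n := by
  rcases n with _ | _ | _ | _ | m
  · decide
  · decide
  · decide
  · decide
  · have e1 : fDP10 (m+4+1) = (m+1)*2^(m+2)+1 := rfl
    have e2 : fDP10 (m+4) = m*2^(m+1)+1 := rfl
    have e3 : fN10 (m+4) = (m+2)*2^(m+1) := rfl
    rw [e1, e2, e3]
    ring

lemma aE10 (n : ℕ) : fE10 (n+1) = fE10 n + fDP10 n := by
  rcases n with _ | _ | _ | _ | _ | _ | m
  · decide
  · decide
  · decide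
  · decide
  · decide
  · decide
  · have e1 : fE10 (m+6+1) = (m+1)*2^(m+4) + (m+1) + 6 := rfl
    have e2 : fE10 (m+6) = m*2^(m+3) + m + 6 := rfl
    have e3 : fDP10 (m+6) = (m+2)*2^(m+3)+1 := rfl
    rw [e1, e2, e3]
    ring

lemma aH01 (n : ℕ) : fDP10 (n+1) = fSH00 n + fDP10 n + fDP10 n := by
  rcases n with _ | _ | _ | _ | m
  · decide
  · decide
  · decide
  · decide
  · have e1 : fDP10 (m+4+1) = (m+1)*2^(m+2)+1 := rfl
    have e2 : fSH00 (m+4) = 2^(m+2) - 1 := rfl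
    have e3 : fDP10 (m+4) = m*2^(m+1)+1 := rfl
    have h := otp (m+2)
    rw [e1, e2, e3]
    zify [h]
    ring

lemma aN11 (n : ℕ) : fN11 (n+1) = fW00 n + fE10 n + fDP10 n + fN11 n + fDP11 n := by
  rcases n with _ | _ | _ | _ | _ | _ | m
  · decide
  · decide
  · decide
  · decide
  · decide
  · decide
  · have e1 : fN11 (m+6+1) = (m+4)*(m+3)*2^(m+2) := rfl
    have e2 : fW00 (m+6) = 2^(m+4) - 1 - (m+4) := rfl
    have e3 : fE10 (m+6) = m*2^(m+3) + m + 6 := rfl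
    have e4 : fDP10 (m+6) = (m+2)*2^(m+3)+1 := rfl
    have e5 : fN11 (m+6) = (m+3)*(m+2)*2^(m+1) := rfl
    have e6 : fDP11 (m+6) = ((m+1)*(m+1) - (m+1) + 2)*2^(m+1) - 2 := rfl
    have h1 := Nat.lt_two_pow_self (n := m+4)
    have h2 := otp (m+4)
    have h3 : m + 1 ≤ (m+1)*(m+1) := le_sq (m+1)
    have h4 : 2 ≤ ((m+1)*(m+1) - (m+1) + 2)*2^(m+1) := by
      have : 2 ≤ (m+1)*(m+1) - (m+1) + 2 := by omega
      calc 2 = 2 * 1 := by omega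
        _ ≤ ((m+1)*(m+1) - (m+1) + 2)*2^(m+1) := Nat.mul_le_mul this (otp (m+1))
    rw [e1, e2, e3, e4, e5, e6]
    zify [h1.le, h2, h3, h4, Nat.le_sub_one_of_lt h1]
    ring

lemma aDP11 (n : ℕ) : fDP11 (n+1) = fDP11 n + fN11 n := by
  rcases n with _ | _ | _ | _ | _ | m
  · decide
  · decide
  · decide
  · decide
  · decide
  · have e1 : fDP11 (m+5+1) = ((m+1)*(m+1) - (m+1) + 2)*2^(m+1) - 2 := rfl
    have e2 : fDP11 (m+5) = (m*m - m + 2)*2^m - 2 := rfl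
    have e3 : fN11 (m+5) = (m+2)*(m+1)*2^m := rfl
    have h3 : m + 1 ≤ (m+1)*(m+1) := le_sq (m+1)
    have h3' : m ≤ m*m := le_sq m
    have h4 : 2 ≤ ((m+1)*(m+1) - (m+1) + 2)*2^(m+1) := by
      have : 2 ≤ (m+1)*(m+1) - (m+1) + 2 := by omega
      calc 2 = 2 * 1 := by omega
        _ ≤ ((m+1)*(m+1) - (m+1) + 2)*2^(m+1) := Nat.mul_le_mul this (otp (m+1))
    have h5 : 2 ≤ (m*m - m + 2)*2^m := by
      have : 2 ≤ m*m - m + 2 := by omega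
      calc 2 = 2 * 1 := by omega
        _ ≤ (m*m - m + 2)*2^m := Nat.mul_le_mul this (otp m)
    rw [e1, e2, e3]
    zify [h3, h3', h4, h5]
    ring

end S19

namespace S19

lemma perm0_c2 (σ : Perm (Fin 0)) : c2 σ = 0 := by
  unfold c2 count132
  simp

lemma perm0_c3 (σ : Perm (Fin 0)) : c3 σ = 0 := by
  unfold c3 count123
  simp

lemma perm0_dp (σ : Perm (Fin 0)) : dp σ = 0 := by
  rw [dp]
  simp

lemma perm0_Ast (σ : Perm (Fin 0)) (q : ℕ) : Ast σ q = 0 := by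
  unfold Ast
  simp

lemma perm0_Bst (σ : Perm (Fin 0)) (q : ℕ) : Bst σ q = 0 := by
  unfold Bst
  simp

lemma perm0_hst (σ : Perm (Fin 0)) : hst σ = 0 := by
  rw [hst, Fin.sum_univ_one, perm0_Ast]
  simp

lemma perm0_est (σ : Perm (Fin 0)) : est σ = 0 := by
  rw [est, Fin.sum_univ_one, perm0_Bst]
  simp

lemma perm0_wst (σ : Perm (Fin 0)) : wst σ = 0 := by
  rw [wst, Fin.sum_univ_one, perm0_Ast]
  simp

lemma base00N : cN 0 0 0 = 1 := by
  rw [cN]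
  rw [Finset.sum_congr rfl (fun σ _ => if_pos ⟨perm0_c2 σ, perm0_c3 σ⟩)]
  simp

lemma base_stat_zero (v : Equiv.Perm (Fin 0) → ℕ) (hv : ∀ σ, v σ = 0) (a b : ℕ) :
    (∑ σ : Perm (Fin 0), if c2 σ = a ∧ c3 σ = b then v σ else 0) = 0 := by
  apply Finset.sum_eq_zero
  intro σ _
  rw [hv σ]
  simp

lemma base_ne (a b : ℕ) (h : ¬(a = 0 ∧ b = 0)) (v : Equiv.Perm (Fin 0) → ℕ) :
    (∑ σ : Perm (Fin 0), if c2 σ = a ∧ c3 σ = b then v σ else 0) = 0 := by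
  apply Finset.sum_eq_zero
  intro σ _
  rw [if_neg]
  rw [perm0_c2, perm0_c3]
  intro ⟨h1, h2⟩
  exact h ⟨h1.symm, h2.symm⟩

lemma allP (n : ℕ) :
    cN 0 0 n = fN00 n ∧ cDP 0 0 n = fDP00 n ∧ cH 0 0 n = fH00 n ∧ cE 0 0 n = fH00 n ∧
    cSH 0 0 n = fSH00 n ∧ cES 0 0 n = fSH00 n ∧ cW 0 0 n = fW00 n ∧
    cN 1 0 n = fN10 n ∧ cDP 1 0 n = fDP10 n ∧ cE 1 0 n = fE10 n ∧
    cN 0 1 n = fN10 n ∧ cDP 0 1 n = fDP10 n ∧ cH 0 1 n = fDP10 n ∧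
    cN 1 1 n = fN11 n ∧ cDP 1 1 n = fDP11 n := by
  induction n with
  | zero =>
    refine ⟨base00N, ?_, ?_, ?_, ?_, ?_, ?_, ?_, ?_, ?_, ?_, ?_, ?_, ?_, ?_⟩
    · exact (base_stat_zero dp perm0_dp 0 0)
    · exact (base_stat_zero hst perm0_hst 0 0)
    · exact (base_stat_zero est perm0_est 0 0)
    · exact (base_stat_zero _ (fun σ => by rw [perm0_hst σ, mul_zero]) 0 0)
    · exact (base_stat_zero _ (fun σ => by rw [perm0_est σ, zero_mul]) 0 0)
    · exact (base_stat_zero wst perm0_wst 0 0)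
    · exact (base_ne 1 0 (by omega) _)
    · exact (base_ne 1 0 (by omega) _)
    · exact (base_ne 1 0 (by omega) _)
    · exact (base_ne 0 1 (by omega) _)
    · exact (base_ne 0 1 (by omega) _)
    · exact (base_ne 0 1 (by omega) _)
    · exact (base_ne 1 1 (by omega) _)
    · exact (base_ne 1 1 (by omega) _)
  | succ n ih =>
    obtain ⟨h1, h2, h3, h4, h5, h6, h7, h8, h9, h10, h11, h12, h13, h14, h15⟩ := ih
    refine ⟨?_, ?_, ?_, ?_, ?_, ?_, ?_, ?_, ?_, ?_, ?_, ?_, ?_, ?_, ?_⟩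
    · rw [rec_N00, h1, h2]; exact (aN00 n).symm
    · rw [rec_DP00, h1, h2]; exact (aDP00 n).symm
    · rw [rec_H00, h2, h3]; exact (aH00 n).symm
    · rw [rec_E00, h2, h4]; exact (aH00 n).symm
    · rw [rec_SH00, h3]; exact (aSH00 n).symm
    · rw [rec_ES00, h4]; exact (aSH00 n).symm
    · rw [rec_W00, h5, h7]; exact (aW00 n).symm
    · rw [rec_N10, h3, h8, h9]; exact (aN10 n).symm
    · rw [rec_DP10, h8, h9]; exact (aDP10 n).symm
    · rw [rec_E10, h9, h10]; exact (aE10 n).symm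
    · rw [rec_N01, h4, h11, h12]; exact (aN10 n).symm
    · rw [rec_DP01, h11, h12]; exact (aDP10 n).symm
    · rw [rec_H01, h6, h12, h13]; exact (aH01 n).symm
    · rw [rec_N11, h7, h10, h13, h14, h15]; exact (aN11 n).symm
    · rw [rec_DP11, h14, h15]; exact (aDP11 n).symm

lemma cN10_eq (n : ℕ) : cN 1 0 n = fN10 n := (allP n).2.2.2.2.2.2.2.1

lemma cN11_eq (n : ℕ) : cN 1 1 n = fN11 n := by
  have h := allP n
  exact h.2.2.2.2.2.2.2.2.2.2.2.2.2.1

end S19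

/-- `g r n` is the number of permutations of `{1,…,n}` that contain exactly
one (132) pattern and exactly `r` (123) patterns. -/
noncomputable def g (r n : ℕ) : ℕ :=
  Nat.card {π : Equiv.Perm (Fin n) //
    count132 (fun i => (π i : ℕ)) = 1 ∧ count123 (fun i => (π i : ℕ)) = r}

namespace S19

lemma g_eq (r n : ℕ) : g r n = cN 1 r n := by
  rw [g, Nat.card_eq_fintype_card, Fintype.card_subtype, cN, Finset.card_filter]
  apply Finset.sum_congr rfl
  intro σ _
  exact if_congr Iff.rfl rfl rfl

lemma g0_eq (n : ℕ) : g 0 n = fN10 n := by rw [g_eq, cN10_eq]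

lemma g1_eq (n : ℕ) : g 1 n = fN11 n := by rw [g_eq, cN11_eq]

lemma key0 (n : ℕ) : (g 0 n : ℤ) - 4*(if 1 ≤ n then (g 0 (n-1) : ℤ) else 0)
    + 4*(if 2 ≤ n then (g 0 (n-2) : ℤ) else 0) = if n = 3 then 1 else 0 := by
  rcases n with _ | _ | _ | _ | _ | m
  · simp [g0_eq, fN10]
  · simp [g0_eq, fN10]
  · simp [g0_eq, fN10]
  · norm_num [g0_eq]
    have e1 : fN10 3 = 1 := rfl
    have e2 : fN10 2 = 0 := rfl
    have e3 : fN10 1 = 0 := rfl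
    rw [e1, e2, e3]
    norm_num
  · norm_num [g0_eq]
    have e1 : fN10 4 = 4 := rfl
    have e2 : fN10 3 = 1 := rfl
    have e3 : fN10 2 = 0 := rfl
    rw [e1, e2, e3]
    norm_num
  · have hn5 : m + 5 ≠ 3 := by omega
    rw [if_pos (by omega : 1 ≤ m + 5), if_pos (by omega : 2 ≤ m + 5), if_neg hn5]
    have v1 : m + 5 - 1 = m + 4 := by omega
    have v2 : m + 5 - 2 = m + 3 := by omega
    rw [v1, v2, g0_eq, g0_eq, g0_eq]
    have e1 : fN10 (m+5) = (m+3)*2^(m+2) := rfl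
    have e2 : fN10 (m+4) = (m+2)*2^(m+1) := rfl
    have e3 : fN10 (m+3) = (m+1)*2^m := rfl
    rw [e1, e2, e3]
    push_cast
    ring

lemma key1 (n : ℕ) : (g 1 n : ℤ) - 6*(if 1 ≤ n then (g 1 (n-1) : ℤ) else 0)
    + 12*(if 2 ≤ n then (g 1 (n-2) : ℤ) else 0)
    - 8*(if 3 ≤ n then (g 1 (n-3) : ℤ) else 0) = if n = 5 then 2 else 0 := by
  have hv : ∀ k, (g 1 k : ℤ) = (fN11 k : ℤ) := fun k => by rw [g1_eq]
  rcases n with _ | _ | _ | _ | _ | _ | _ | _ | m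
  · simp [hv, fN11]
  · simp [hv, fN11]
  · simp [hv, fN11]
  · norm_num [hv]
    have e1 : fN11 3 = 0 := rfl
    have e2 : fN11 2 = 0 := rfl
    have e3 : fN11 1 = 0 := rfl
    have e4 : fN11 0 = 0 := rfl
    rw [e1, e2, e3, e4]
    norm_num
  · norm_num [hv]
    have e1 : fN11 4 = 0 := rfl
    have e2 : fN11 3 = 0 := rfl
    have e3 : fN11 2 = 0 := rfl
    have e4 : fN11 1 = 0 := rfl
    rw [e1, e2, e3, e4]
    norm_num
  · norm_num [hv]
    have e1 : fN11 5 = 2 := rfl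
    have e2 : fN11 4 = 0 := rfl
    have e3 : fN11 3 = 0 := rfl
    have e4 : fN11 2 = 0 := rfl
    rw [e1, e2, e3, e4]
    norm_num
  · norm_num [hv]
    have e1 : fN11 6 = 12 := rfl
    have e2 : fN11 5 = 2 := rfl
    have e3 : fN11 4 = 0 := rfl
    have e4 : fN11 3 = 0 := rfl
    rw [e1, e2, e3, e4]
    norm_num
  · norm_num [hv]
    have e1 : fN11 7 = 48 := rfl
    have e2 : fN11 6 = 12 := rfl
    have e3 : fN11 5 = 2 := rfl
    have e4 : fN11 4 = 0 := rfl
    rw [e1, e2, e3, e4]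
    norm_num
  · have hn5 : m + 8 ≠ 5 := by omega
    rw [if_pos (by omega : 1 ≤ m + 8), if_pos (by omega : 2 ≤ m + 8),
      if_pos (by omega : 3 ≤ m + 8), if_neg hn5]
    have v1 : m + 8 - 1 = m + 7 := by omega
    have v2 : m + 8 - 2 = m + 6 := by omega
    have v3 : m + 8 - 3 = m + 5 := by omega
    rw [v1, v2, v3, hv, hv, hv, hv]
    have e1 : fN11 (m+8) = (m+5)*(m+4)*2^(m+3) := rfl
    have e2 : fN11 (m+7) = (m+4)*(m+3)*2^(m+2) := rfl
    have e3 : fN11 (m+6) = (m+3)*(m+2)*2^(m+1) := rfl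
    have e4 : fN11 (m+5) = (m+2)*(m+1)*2^m := rfl
    rw [e1, e2, e3, e4]
    push_cast
    ring

end S19

/-- For `n ≥ 3`, the number of permutations of `{1,…,n}` with exactly one
(132) pattern and no (123) pattern is `(n-2)·2^{n-3}` (and `0` for `n < 3`);
equivalently `Σ_{n≥0} g₀(n) zⁿ = z³/(1-2z)²`, stated with the unit `(1-2z)²`
cleared.  For `n ≥ 5`, the number of permutations of `{1,…,n}` with exactly
one (132) pattern and exactly one (123) pattern is `(n-3)(n-4)·2^{n-5}` (and
`0` for `n < 5`); equivalently `Σ_{n≥0} g₁(n) zⁿ = 2z⁵/(1-2z)³`, stated with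
the unit `(1-2z)³` cleared. -/
theorem stmt19 :
    (∀ n : ℕ, 3 ≤ n → g 0 n = (n - 2) * 2 ^ (n - 3)) ∧
    (∀ n : ℕ, n < 3 → g 0 n = 0) ∧
    (1 - 2 * PowerSeries.X) ^ 2 * PowerSeries.mk (fun n => (g 0 n : ℤ)) =
      PowerSeries.X ^ 3 ∧
    (∀ n : ℕ, 5 ≤ n → g 1 n = (n - 3) * (n - 4) * 2 ^ (n - 5)) ∧
    (∀ n : ℕ, n < 5 → g 1 n = 0) ∧
    (1 - 2 * PowerSeries.X) ^ 3 * PowerSeries.mk (fun n => (g 1 n : ℤ)) =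
      2 * PowerSeries.X ^ 5 := by
  refine ⟨?_, ?_, ?_, ?_, ?_, ?_⟩
  · intro n hn
    obtain ⟨m, rfl⟩ : ∃ m, n = m + 3 := ⟨n - 3, by omega⟩
    rw [S19.g0_eq]
    have e1 : S19.fN10 (m+3) = (m+1)*2^m := rfl
    rw [e1, show m+3-2 = m+1 from by omega, show m+3-3 = m from by omega]
  · intro n hn
    interval_cases n
    · rw [S19.g0_eq]; rfl
    · rw [S19.g0_eq]; rfl
    · rw [S19.g0_eq]; rfl
  · apply PowerSeries.ext
    intro n
    have h4 : (PowerSeries.C (R := ℤ)) 4 = 4 := map_ofNat _ 4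
    have expand : (1 - 2 * PowerSeries.X) ^ 2 * PowerSeries.mk (fun n => (g 0 n : ℤ))
        = PowerSeries.mk (fun n => (g 0 n : ℤ))
          - (PowerSeries.C (R := ℤ) 4) * (PowerSeries.mk (fun n => (g 0 n : ℤ)) * PowerSeries.X^1)
          + (PowerSeries.C (R := ℤ) 4) * (PowerSeries.mk (fun n => (g 0 n : ℤ)) * PowerSeries.X^2) := by
      rw [h4]
      ring
    rw [expand, map_add, map_sub, PowerSeries.coeff_C_mul, PowerSeries.coeff_C_mul,
      PowerSeries.coeff_mul_X_pow', PowerSeries.coeff_mul_X_pow', PowerSeries.coeff_mk,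
      PowerSeries.coeff_X_pow]
    simp only [PowerSeries.coeff_mk]
    exact S19.key0 n
  · intro n hn
    obtain ⟨m, rfl⟩ : ∃ m, n = m + 5 := ⟨n - 5, by omega⟩
    rw [S19.g1_eq]
    have e1 : S19.fN11 (m+5) = (m+2)*(m+1)*2^m := rfl
    rw [e1]
    have v1 : m + 5 - 3 = m + 2 := by omega
    have v2 : m + 5 - 4 = m + 1 := by omega
    have v3 : m + 5 - 5 = m := by omega
    rw [v1, v2, v3]
  · intro n hn
    interval_cases n
    · rw [S19.g1_eq]; rfl
    · rw [S19.g1_eq]; rfl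
    · rw [S19.g1_eq]; rfl
    · rw [S19.g1_eq]; rfl
    · rw [S19.g1_eq]; rfl
  · apply PowerSeries.ext
    intro n
    have h6 : (PowerSeries.C (R := ℤ)) 6 = 6 := map_ofNat _ 6
    have h12 : (PowerSeries.C (R := ℤ)) 12 = 12 := map_ofNat _ 12
    have h8 : (PowerSeries.C (R := ℤ)) 8 = 8 := map_ofNat _ 8
    have h2 : (PowerSeries.C (R := ℤ)) 2 = 2 := map_ofNat _ 2
    have expand : (1 - 2 * PowerSeries.X) ^ 3 * PowerSeries.mk (fun n => (g 1 n : ℤ))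
        = PowerSeries.mk (fun n => (g 1 n : ℤ))
          - (PowerSeries.C (R := ℤ) 6) * (PowerSeries.mk (fun n => (g 1 n : ℤ)) * PowerSeries.X^1)
          + (PowerSeries.C (R := ℤ) 12) * (PowerSeries.mk (fun n => (g 1 n : ℤ)) * PowerSeries.X^2)
          - (PowerSeries.C (R := ℤ) 8) * (PowerSeries.mk (fun n => (g 1 n : ℤ)) * PowerSeries.X^3) := by
      rw [h6, h12, h8]
      ring
    have expand2 : (2 : PowerSeries ℤ) * PowerSeries.X ^ 5
        = (PowerSeries.C (R := ℤ) 2) * PowerSeries.X ^ 5 := by rw [h2]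
    rw [expand, expand2, map_sub, map_add, map_sub, PowerSeries.coeff_C_mul,
      PowerSeries.coeff_C_mul, PowerSeries.coeff_C_mul, PowerSeries.coeff_C_mul,
      PowerSeries.coeff_mul_X_pow', PowerSeries.coeff_mul_X_pow',
      PowerSeries.coeff_mul_X_pow', PowerSeries.coeff_mk, PowerSeries.coeff_X_pow]
    simp only [PowerSeries.coeff_mk]
    have hk := S19.key1 n
    simp only [mul_ite, mul_one, mul_zero] at hk ⊢
    exact hk
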